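/- arXiv:1110.3411 — 4 statements merged into one kernel-verified Lean document; each statement's English description precedes it below -/
import Mathlib

section
/- Let A be a C*-algebra, let π₀ be a finite-dimensional irreducible representation of A on H₀, and let F be a finite set of finite-dimensional irreducible representations of A, none unitarily equivalent to π₀. Then for every c ∈ L(H₀) there exists b ∈ A with π₀(b) = c and π(b) = 0 for all π ∈ F. -/
open LinearMap in
private theorem aux_simple_ss {R M : Type*} [Ring R] [AddCommGroup M] [Module R M]
    [IsSimpleModule R M] : IsSemisimpleModule R M :=
  IsSemisimpleModule.of_sSup_simples_eq_top <| le_antisymm le_top <| le_sSup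
    (show IsSimpleModule R (⊤ : Submodule R M) from .congr Submodule.topEquiv)

private theorem aux_prod_ss {R M N : Type*} [Ring R] [AddCommGroup M] [AddCommGroup N]
    [Module R M] [Module R N] [IsSemisimpleModule R M] [IsSemisimpleModule R N] :
    IsSemisimpleModule R (M × N) := by
  have h1 : IsSemisimpleModule R (Submodule.fst R M N) := .congr (Submodule.fstEquiv R M N)
  have h2 : IsSemisimpleModule R (Submodule.snd R M N) := .congr (Submodule.sndEquiv R M N)
  have h3 := IsSemisimpleModule.sup h1 h2
  rw [Submodule.fst_sup_snd] at h3
  exact IsSemisimpleModule.congr (Submodule.topEquiv (R := R) (M := M × N)).symm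

private theorem aux_pi_ss {R ι : Type*} [Ring R] [Finite ι] {M : ι → Type*}
    [∀ i, AddCommGroup (M i)] [∀ i, Module R (M i)] [∀ i, IsSemisimpleModule R (M i)] :
    IsSemisimpleModule R (∀ i, M i) := by
  classical
  exact isSemisimpleModule_of_isSemisimpleModule_submodule'
    (p := fun i => LinearMap.range (LinearMap.single R M i))
    (fun i => .range _)
    (by simp_rw [LinearMap.range_eq_map, Submodule.iSup_map_single, Submodule.pi_top])

private theorem aux_pi_ss' {R ι : Type*} [Ring R] [Finite ι] {M : ι → Type*}
    [∀ i, AddCommGroup (M i)] [∀ i, Module R (M i)] [∀ i, IsSemisimpleModule R (M i)] :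
    IsSemisimpleModule R (∀ i, M i) := by
  classical
  exact isSemisimpleModule_of_isSemisimpleModule_submodule'
    (p := fun i => LinearMap.range (LinearMap.single R M i))
    (fun i => .range _)
    (by simp_rw [LinearMap.range_eq_map, Submodule.iSup_map_single, Submodule.pi_top])

private theorem aux_density {R V : Type*} [Ring R] [AddCommGroup V] [Module R V]
    [IsSemisimpleModule R V] (f : V →+ V)
    (hf : ∀ (g : V →ₗ[R] V) (x : V), f (g x) = g (f x))
    {n : ℕ} (v : Fin n → V) : ∃ r : R, ∀ k, f (v k) = r • v k := by
  classical
  haveI : IsSemisimpleModule R (Fin n → V) := aux_pi_ss'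
  set N : Submodule R (Fin n → V) := Submodule.span R {v} with hN
  obtain ⟨C, hC⟩ := exists_isCompl N
  let e : (Fin n → V) →ₗ[R] (Fin n → V) := N.subtype.comp (N.projectionOnto C hC)
  have hvN : v ∈ N := Submodule.mem_span_singleton_self v
  have he : e v = v := by
    show (N.subtype) (N.projectionOnto C hC v) = v
    rw [show v = ((⟨v, hvN⟩ : N) : Fin n → V) from rfl,
      Submodule.linearProjOfIsCompl_apply_left hC]
    rfl
  have hF : ∀ (g : (Fin n → V) →ₗ[R] (Fin n → V)) (x : Fin n → V) (k : Fin n),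
      f ((g x) k) = (g (fun j => f (x j))) k := by
    intro g x k
    have h1 : g x = ∑ j, g (Pi.single j (x j)) := by
      rw [← map_sum, Finset.univ_sum_single]
    have h2 : (fun j => f (x j)) = ∑ j, Pi.single j (f (x j)) := by
      rw [Finset.univ_sum_single]
    rw [h1, h2, map_sum, Finset.sum_apply, Finset.sum_apply, map_sum]
    refine Finset.sum_congr rfl fun j _ => ?_
    simpa using hf ((LinearMap.proj k).comp (g.comp (LinearMap.single R (fun _ => V) j))) (x j)
  have key : (fun k => f (v k)) ∈ N := by
    have h3 : (fun k => f (v k)) = e (fun j => f (v j)) := by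
      funext k
      have := hF e v k
      rw [he] at this
      exact this
    rw [h3]
    show (N.subtype) (N.projectionOnto C hC _) ∈ N
    exact Submodule.coe_mem _
  obtain ⟨r, hr⟩ := Submodule.mem_span_singleton.mp key
  exact ⟨r, fun k => by rw [← congrFun hr k]; rfl⟩

private theorem aux_simple_of_irr {R H : Type*} [Ring R] [AddCommGroup H] [Module ℂ H]
    [Module R H] (σ : ℂ → R) (hσ : ∀ (z : ℂ) (y : H), σ z • y = z • y)
    (hnt : ∃ x : H, x ≠ 0)
    (hirr : ∀ V : Submodule ℂ H, (∀ (r : R), ∀ x ∈ V, r • x ∈ V) → V = ⊥ ∨ V = ⊤) :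
    IsSimpleModule R H := by
  obtain ⟨x₀, hx₀⟩ := hnt
  haveI : Nontrivial H := ⟨x₀, 0, hx₀⟩
  rw [isSimpleModule_iff]
  constructor
  intro N
  let Nc : Submodule ℂ H :=
    { carrier := N
      add_mem' := fun ha hb => N.add_mem ha hb
      zero_mem' := N.zero_mem
      smul_mem' := fun z x hx => by
        have := N.smul_mem (σ z) hx
        rwa [hσ] at this }
  have hmem : ∀ x : H, x ∈ Nc ↔ x ∈ N := fun _ => Iff.rfl
  rcases hirr Nc (fun r x hx => N.smul_mem r hx) with h | h
  · left
    rw [Submodule.eq_bot_iff] at h ⊢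
    exact fun x hx => h x hx
  · right
    rw [Submodule.eq_top_iff'] at h ⊢
    exact h

private theorem aux_symm {R H K : Type*} [Ring R] [NormedAddCommGroup H]
    [InnerProductSpace ℂ H] [NormedAddCommGroup K] [InnerProductSpace ℂ K]
    [Module R H] [Module R K]
    (h : ¬ ∃ U : H ≃ₗᵢ[ℂ] K, ∀ (r : R) (x : H), r • (U x) = U (r • x)) :
    ¬ ∃ U : K ≃ₗᵢ[ℂ] H, ∀ (r : R) (x : K), r • (U x) = U (r • x) := by
  rintro ⟨U, hU⟩
  refine h ⟨U.symm, fun r x => ?_⟩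
  have h1 := hU r (U.symm x)
  rw [U.apply_symm_apply] at h1
  rw [h1, U.symm_apply_apply]

private theorem aux_schur_endo {R H : Type*} [Ring R] [NormedAddCommGroup H]
    [InnerProductSpace ℂ H] [FiniteDimensional ℂ H] [Module R H] [IsSimpleModule R H]
    (σ : ℂ → R) (hσ : ∀ (z : ℂ) (y : H), σ z • y = z • y)
    (hcomm : ∀ (z : ℂ) (r : R) (x : H), r • (z • x) = z • (r • x))
    (φ : H →ₗ[R] H) : ∃ μ : ℂ, ∀ x, φ x = μ • x := by
  haveI := IsSimpleModule.nontrivial R H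
  let ψ : H →ₗ[ℂ] H :=
    { toFun := φ
      map_add' := φ.map_add
      map_smul' := fun z x => by
        show φ (z • x) = z • φ x
        rw [← hσ, φ.map_smul, hσ] }
  obtain ⟨μ, hμ⟩ := Module.End.exists_eigenvalue ψ
  obtain ⟨x₀, hx₀⟩ := hμ.exists_hasEigenvector
  refine ⟨μ, ?_⟩
  let N : Submodule R H :=
    { carrier := {x : H | φ x = μ • x}
      zero_mem' := by simp
      add_mem' := fun {a b} ha hb => by
        simp only [Set.mem_setOf_eq] at *
        rw [φ.map_add, ha, hb, smul_add]
      smul_mem' := fun r x hx => by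
        simp only [Set.mem_setOf_eq] at *
        rw [φ.map_smul, hx, hcomm] }
  have hx₀N : x₀ ∈ N := hx₀.apply_eq_smul
  rcases eq_bot_or_eq_top N with h | h
  · rw [h] at hx₀N
    exact absurd hx₀N (by simpa using hx₀.right)
  · intro x
    have : x ∈ N := h ▸ Submodule.mem_top
    exact this


private theorem aux_schur_hom {R H K : Type*} [Ring R]
    [NormedAddCommGroup H] [InnerProductSpace ℂ H] [FiniteDimensional ℂ H]
    [NormedAddCommGroup K] [InnerProductSpace ℂ K] [FiniteDimensional ℂ K]
    [Module R H] [Module R K] [IsSimpleModule R H] [IsSimpleModule R K]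
    (σ : ℂ → R) (hσH : ∀ (z : ℂ) (y : H), σ z • y = z • y)
    (hσK : ∀ (z : ℂ) (y : K), σ z • y = z • y)
    (hcommH : ∀ (z : ℂ) (r : R) (x : H), r • (z • x) = z • (r • x))
    (hcommK : ∀ (z : ℂ) (r : R) (x : K), r • (z • x) = z • (r • x))
    (st : R → R)
    (hstH : ∀ (r : R) (x y : H), (inner ℂ (r • x) y : ℂ) = inner ℂ x (st r • y))
    (hstK : ∀ (r : R) (x y : K), (inner ℂ (r • x) y : ℂ) = inner ℂ x (st r • y))
    (hne : ¬ ∃ U : H ≃ₗᵢ[ℂ] K, ∀ (r : R) (x : H), r • (U x) = U (r • x))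
    (T : H →ₗ[R] K) : T = 0 := by
  by_contra hT
  have hbij := LinearMap.bijective_of_ne_zero hT
  let Tℂ : H →ₗ[ℂ] K :=
    { toFun := T
      map_add' := T.map_add
      map_smul' := fun z x => by
        show T (z • x) = z • T x
        rw [← hσH, T.map_smul, hσK] }
  have hTbij : Function.Bijective Tℂ := hbij
  let adj := LinearMap.adjoint Tℂ
  have hS : ∀ (r : R) (x : H), adj (Tℂ (r • x)) = r • adj (Tℂ x) := by
    intro r x
    refine ext_inner_right ℂ fun v => ?_
    rw [LinearMap.adjoint_inner_left]
    calc (inner ℂ (Tℂ (r • x)) (Tℂ v) : ℂ)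
        = inner ℂ (Tℂ x) (Tℂ (st r • v)) := by
          show (inner ℂ (T (r • x)) (Tℂ v) : ℂ) = inner ℂ (Tℂ x) (T (st r • v))
          rw [T.map_smul, T.map_smul]
          exact hstK r (Tℂ x) (Tℂ v)
      _ = inner ℂ (adj (Tℂ x)) (st r • v) := (LinearMap.adjoint_inner_left Tℂ _ _).symm
      _ = inner ℂ (r • adj (Tℂ x)) v := (hstH r _ v).symm
  let S : H →ₗ[R] H :=
    { toFun := fun x => adj (Tℂ x)
      map_add' := fun a b => by simp [map_add]
      map_smul' := hS }
  obtain ⟨μ, hμ⟩ := aux_schur_endo σ hσH hcommH S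
  haveI := IsSimpleModule.nontrivial R H
  obtain ⟨x₀, hx₀⟩ := exists_ne (0 : H)
  have hTx₀ : Tℂ x₀ ≠ 0 := fun h =>
    hx₀ (hbij.injective (show T x₀ = T 0 by rw [map_zero]; exact h))
  have key : ∀ x y : H, (inner ℂ (Tℂ x) (Tℂ y) : ℂ) = μ * inner ℂ x y := by
    intro x y
    have h1 : (inner ℂ x (adj (Tℂ y)) : ℂ) = inner ℂ (Tℂ x) (Tℂ y) :=
      LinearMap.adjoint_inner_right Tℂ x (Tℂ y)
    have h2 : adj (Tℂ y) = μ • y := hμ y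
    rw [← h1, h2, inner_smul_right]
  -- μ is real and positive
  set t : ℝ := (‖Tℂ x₀‖ ^ 2) / (‖x₀‖ ^ 2) with ht_def
  have hx₀n : (0:ℝ) < ‖x₀‖ ^ 2 := pow_pos (norm_pos_iff.mpr hx₀) 2
  have hTx₀n : (0:ℝ) < ‖Tℂ x₀‖ ^ 2 := pow_pos (norm_pos_iff.mpr hTx₀) 2
  have ht : 0 < t := div_pos hTx₀n hx₀n
  have hμt : μ = (t : ℂ) := by
    have h3 := key x₀ x₀
    rw [inner_self_eq_norm_sq_to_K, inner_self_eq_norm_sq_to_K] at h3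
    rw [show @RCLike.ofReal ℂ _ ‖Tℂ x₀‖ = ((‖Tℂ x₀‖ : ℝ) : ℂ) from rfl,
      show @RCLike.ofReal ℂ _ ‖x₀‖ = ((‖x₀‖ : ℝ) : ℂ) from rfl] at h3
    have h4 : ((‖x₀‖ : ℂ) ^ 2) ≠ 0 :=
      pow_ne_zero 2 (by exact_mod_cast norm_ne_zero_iff.mpr hx₀)
    have h5 : (t:ℂ) = (‖Tℂ x₀‖:ℂ)^2 / (‖x₀‖:ℂ)^2 := by rw [ht_def]; push_cast; ring
    rw [h5, h3, mul_div_assoc, div_self h4, mul_one]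
  set s : ℝ := (Real.sqrt t)⁻¹ with hs_def
  have hs0 : s ≠ 0 := by
    simp [hs_def, Real.sqrt_eq_zero', not_le, ht, ne_of_gt]
  have hst' : (s:ℂ)^2 * (t:ℂ) = 1 := by
    have : s^2 * t = 1 := by
      rw [hs_def, inv_pow, Real.sq_sqrt ht.le]
      field_simp
    exact_mod_cast congrArg (Complex.ofReal) this
  let T2 : H →ₗ[ℂ] K := (s : ℂ) • Tℂ
  have hT2bij : Function.Bijective T2 := by
    constructor
    · intro a b hab
      apply hTbij.injective
      have hab' : (s:ℂ) • Tℂ a = (s:ℂ) • Tℂ b := hab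
      have hsc : (s:ℂ) ≠ 0 := by exact_mod_cast hs0
      exact smul_right_injective K hsc hab' 
    · intro y
      obtain ⟨x, hx⟩ := hTbij.surjective ((s:ℂ)⁻¹ • y)
      refine ⟨x, ?_⟩
      show (s:ℂ) • Tℂ x = y
      rw [hx, smul_inv_smul₀ (by exact_mod_cast hs0)]
  have hinner : ∀ x y : H,
      (inner ℂ ((LinearEquiv.ofBijective T2 hT2bij) x) ((LinearEquiv.ofBijective T2 hT2bij) y) : ℂ)
        = inner ℂ x y := by
    intro x y
    simp only [LinearEquiv.ofBijective_apply]
    show (inner ℂ ((s:ℂ) • Tℂ x) ((s:ℂ) • Tℂ y) : ℂ) = inner ℂ x y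
    rw [inner_smul_left, inner_smul_right, key, hμt, Complex.conj_ofReal]
    have : (s:ℂ) * ((s:ℂ) * ((t:ℂ) * inner ℂ x y)) = ((s:ℂ)^2 * (t:ℂ)) * inner ℂ x y := by ring
    rw [this, hst', one_mul]
  refine hne ⟨(LinearEquiv.ofBijective T2 hT2bij).isometryOfInner hinner, fun r x => ?_⟩
  simp only [LinearEquiv.coe_isometryOfInner, LinearEquiv.ofBijective_apply]
  show r • ((s:ℂ) • Tℂ x) = (s:ℂ) • Tℂ (r • x)
  rw [hcommK]
  congr 1
  exact (T.map_smul r x).symm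


set_option maxHeartbeats 2000000 in
/-- Let `A` be a C*-algebra, `π₀` a finite-dimensional irreducible
representation of `A` on `H₀`, and let `F = (π i)_{i : ι}` be a finite family of
finite-dimensional irreducible representations of `A`, none of which is unitarily
equivalent to `π₀`.  Then for every `c ∈ L(H₀)` there exists `b ∈ A` with
`π₀ b = c` and `π i b = 0` for all `i`. -/
theorem separation_from_finitely_many_inequivalent_irreps
    {A : Type*} [NonUnitalCStarAlgebra A]
    {H₀ : Type*} [NormedAddCommGroup H₀] [InnerProductSpace ℂ H₀] [FiniteDimensional ℂ H₀]
    (π₀ : A →⋆ₙₐ[ℂ] (H₀ →L[ℂ] H₀))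
    (hπ₀ne : ∃ a : A, π₀ a ≠ 0)
    (hπ₀irr : ∀ V : Submodule ℂ H₀, (∀ (a : A), ∀ x ∈ V, π₀ a x ∈ V) → V = ⊥ ∨ V = ⊤)
    {ι : Type*} [Fintype ι]
    {H : ι → Type*}
    [∀ i, NormedAddCommGroup (H i)] [∀ i, InnerProductSpace ℂ (H i)]
    [∀ i, FiniteDimensional ℂ (H i)]
    (π : ∀ i, A →⋆ₙₐ[ℂ] (H i →L[ℂ] H i))
    (hπne : ∀ i, ∃ a : A, π i a ≠ 0)
    (hπirr : ∀ i, ∀ V : Submodule ℂ (H i), (∀ (a : A), ∀ x ∈ V, π i a x ∈ V) → V = ⊥ ∨ V = ⊤)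
    (hne : ∀ i, ¬ ∃ U : H₀ ≃ₗᵢ[ℂ] H i, ∀ (a : A) (x : H₀), π i a (U x) = U (π₀ a x)) :
    ∀ c : H₀ →L[ℂ] H₀, ∃ b : A, π₀ b = c ∧ ∀ i, π i b = 0 := by
  intro c
  classical
  let R := Unitization ℂ A
  let ρ₀ : R →⋆ₐ[ℂ] (H₀ →L[ℂ] H₀) := Unitization.starLift π₀
  let ρ : ∀ i, R →⋆ₐ[ℂ] (H i →L[ℂ] H i) := fun i => Unitization.starLift (π i)
  let ρc : R →⋆ₐ[ℂ] (ℂ →L[ℂ] ℂ) := Unitization.starLift (0 : A →⋆ₙₐ[ℂ] (ℂ →L[ℂ] ℂ))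
  letI m₀ : Module R H₀ := Module.compHom H₀ ρ₀.toAlgHom.toRingHom
  letI mI : ∀ i, Module R (H i) := fun i => Module.compHom (H i) (ρ i).toAlgHom.toRingHom
  letI mc : Module R ℂ := Module.compHom ℂ ρc.toAlgHom.toRingHom
  have hs₀ : ∀ (r : R) (x : H₀), r • x = ρ₀ r x := fun _ _ => rfl
  have hsI : ∀ i (r : R) (y : H i), r • y = ρ i r y := fun _ _ _ => rfl
  have hsc : ∀ (r : R) (w : ℂ), r • w = ρc r w := fun _ _ => rfl
  -- action of A through the coercion
  have hact₀ : ∀ a : A, ρ₀ (a : R) = π₀ a := fun a => by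
    conv_rhs => rw [show π₀ = Unitization.starLift.symm ρ₀ from (Equiv.symm_apply_apply _ _).symm]
    rfl
  have hactI : ∀ i (a : A), ρ i (a : R) = π i a := fun i a => by
    conv_rhs => rw [show π i = Unitization.starLift.symm (ρ i) from
      (Equiv.symm_apply_apply _ _).symm]
    rfl
  have hactc : ∀ a : A, ρc (a : R) = 0 := fun a => by
    have h1 : ρc (a : R) = Unitization.starLift.symm ρc a := rfl
    rw [h1, show Unitization.starLift.symm ρc = (0 : A →⋆ₙₐ[ℂ] (ℂ →L[ℂ] ℂ)) from
      Equiv.symm_apply_apply _ _]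
    rfl
  -- scalar action facts
  have halg₀ : ∀ (z : ℂ) (x : H₀), (algebraMap ℂ R z) • x = z • x := fun z x => by
    rw [hs₀, AlgHomClass.commutes]
    simp [Algebra.algebraMap_eq_smul_one]
  have halgI : ∀ i (z : ℂ) (y : H i), (algebraMap ℂ R z) • y = z • y := fun i z y => by
    rw [hsI, AlgHomClass.commutes]
    simp [Algebra.algebraMap_eq_smul_one]
  have halgc : ∀ (z w : ℂ), (algebraMap ℂ R z) • w = z • w := fun z w => by
    rw [hsc, AlgHomClass.commutes]
    simp [Algebra.algebraMap_eq_smul_one]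
  -- commutation with complex scalars
  have hcomm₀ : ∀ (z : ℂ) (r : R) (x : H₀), r • (z • x) = z • (r • x) := fun z r x => by
    rw [hs₀, hs₀, map_smul]
  have hcommI : ∀ i (z : ℂ) (r : R) (y : H i), r • (z • y) = z • (r • y) := fun i z r y => by
    rw [hsI, hsI, map_smul]
  have hcommc : ∀ (z : ℂ) (r : R) (w : ℂ), r • (z • w) = z • (r • w) := fun z r w => by
    rw [hsc, hsc, map_smul]
  -- star/adjoint facts
  have hst₀ : ∀ (r : R) (x y : H₀), (inner ℂ (r • x) y : ℂ) = inner ℂ x ((star r) • y) :=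
    fun r x y => by
      rw [hs₀, hs₀, map_star, ContinuousLinearMap.star_eq_adjoint,
        ContinuousLinearMap.adjoint_inner_right]
  have hstI : ∀ i (r : R) (x y : H i), (inner ℂ (r • x) y : ℂ) = inner ℂ x ((star r) • y) :=
    fun i r x y => by
      rw [hsI, hsI, map_star, ContinuousLinearMap.star_eq_adjoint,
        ContinuousLinearMap.adjoint_inner_right]
  have hstc : ∀ (r : R) (x y : ℂ), (inner ℂ (r • x) y : ℂ) = inner ℂ x ((star r) • y) :=
    fun r x y => by
      rw [hsc, hsc, map_star, ContinuousLinearMap.star_eq_adjoint,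
        ContinuousLinearMap.adjoint_inner_right]
  -- nontriviality
  have hnt₀ : ∃ x : H₀, x ≠ 0 := by
    obtain ⟨a, ha⟩ := hπ₀ne
    by_contra h
    push_neg at h
    exact ha (ContinuousLinearMap.ext fun x => by rw [h x]; simp)
  have hntI : ∀ i, ∃ y : H i, y ≠ 0 := by
    intro i
    obtain ⟨a, ha⟩ := hπne i
    by_contra h
    push_neg at h
    exact ha (ContinuousLinearMap.ext fun x => by rw [h x]; simp)
  -- simplicity of the factors
  haveI hsimp₀ : IsSimpleModule R H₀ := by
    refine aux_simple_of_irr (algebraMap ℂ R) halg₀ hnt₀ fun V hV => hπ₀irr V fun a x hx => ?_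
    have h1 := hV (a : R) x hx
    rwa [hs₀, hact₀] at h1
  haveI hsimpI : ∀ i, IsSimpleModule R (H i) := by
    intro i
    refine aux_simple_of_irr (algebraMap ℂ R) (halgI i) (hntI i) fun V hV =>
      hπirr i V fun a x hx => ?_
    have h1 := hV (a : R) x hx
    rwa [hsI, hactI] at h1
  haveI hsimpc : IsSimpleModule R ℂ := by
    refine aux_simple_of_irr (algebraMap ℂ R) halgc ⟨1, one_ne_zero⟩ fun V _ => ?_
    rcases eq_or_ne V ⊥ with h | h
    · exact Or.inl h
    · refine Or.inr ?_
      obtain ⟨w, hw, hw0⟩ := Submodule.exists_mem_ne_zero_of_ne_bot h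
      rw [Submodule.eq_top_iff']
      intro u
      have h2 : u = (u * w⁻¹) • w := by
        rw [smul_eq_mul]
        field_simp
      rw [h2]
      exact V.smul_mem _ hw
  -- inequivalence in R-module form
  have hne₀I : ∀ i, ¬ ∃ U : H₀ ≃ₗᵢ[ℂ] H i, ∀ (r : R) (x : H₀), r • (U x) = U (r • x) := by
    rintro i ⟨U, hU⟩
    refine hne i ⟨U, fun a x => ?_⟩
    have h1 := hU (a : R) x
    rw [hsI, hactI, hs₀, hact₀] at h1
    exact h1
  have hne₀c : ¬ ∃ U : H₀ ≃ₗᵢ[ℂ] ℂ, ∀ (r : R) (x : H₀), r • (U x) = U (r • x) := by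
    rintro ⟨U, hU⟩
    obtain ⟨a, ha⟩ := hπ₀ne
    refine ha (ContinuousLinearMap.ext fun x => ?_)
    have h1 := hU (a : R) x
    rw [hsc, hactc, hs₀, hact₀] at h1
    have h2 : U (π₀ a x) = 0 := by
      rw [← h1]
      rfl
    simpa using U.map_eq_zero_iff.mp h2
  -- homs into/out of H₀ vanish
  have hzero₀I : ∀ i (T : H₀ →ₗ[R] H i), T = 0 := fun i T => by
    haveI := hsimpI i
    exact aux_schur_hom (algebraMap ℂ R) halg₀ (halgI i) hcomm₀ (hcommI i) star hst₀ (hstI i)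
      (hne₀I i) T
  have hzeroI₀ : ∀ i (T : H i →ₗ[R] H₀), T = 0 := fun i T => by
    haveI := hsimpI i
    exact aux_schur_hom (algebraMap ℂ R) (halgI i) halg₀ (hcommI i) hcomm₀ star (hstI i) hst₀
      (aux_symm (hne₀I i)) T
  have hzero₀c : ∀ T : H₀ →ₗ[R] ℂ, T = 0 := fun T =>
    aux_schur_hom (algebraMap ℂ R) halg₀ halgc hcomm₀ hcommc star hst₀ hstc hne₀c T
  have hzeroc₀ : ∀ T : ℂ →ₗ[R] H₀, T = 0 := fun T =>
    aux_schur_hom (algebraMap ℂ R) halgc halg₀ hcommc hcomm₀ star hstc hst₀ (aux_symm hne₀c) T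
  -- semisimplicity of the big module
  haveI hssI : ∀ i, IsSemisimpleModule R (H i) := fun i => by
    haveI := hsimpI i; exact aux_simple_ss
  haveI : IsSemisimpleModule R (∀ i, H i) := aux_pi_ss'
  haveI : IsSemisimpleModule R ℂ := aux_simple_ss
  haveI : IsSemisimpleModule R ((∀ i, H i) × ℂ) := aux_prod_ss
  haveI : IsSemisimpleModule R H₀ := aux_simple_ss
  haveI : IsSemisimpleModule R (H₀ × ((∀ i, H i) × ℂ)) := aux_prod_ss
  -- the candidate additive map
  let f : (H₀ × ((∀ i, H i) × ℂ)) →+ (H₀ × ((∀ i, H i) × ℂ)) :=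
    { toFun := fun v => (c v.1, 0)
      map_zero' := by simp
      map_add' := fun v w => by simp [Prod.ext_iff] }
  -- f commutes with every R-linear endomorphism
  have hf : ∀ (g : (H₀ × ((∀ i, H i) × ℂ)) →ₗ[R] (H₀ × ((∀ i, H i) × ℂ)))
      (v : H₀ × ((∀ i, H i) × ℂ)), f (g v) = g (f v) := by
    intro g v
    obtain ⟨μ, hμ⟩ := aux_schur_endo (R := R) (algebraMap ℂ R) halg₀ hcomm₀
      ((LinearMap.fst R H₀ ((∀ i, H i) × ℂ)).comp (g.comp (LinearMap.inl R H₀ ((∀ i, H i) × ℂ))))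
    have hp : ∀ x : H₀, (g (x, 0)).1 = μ • x := fun x => by
      have h1 := hμ x
      simpa using h1
    have hq1 : ∀ i (x : H₀), (g (x, 0)).2.1 i = 0 := by
      intro i x
      have hz := hzero₀I i ((LinearMap.proj i).comp ((LinearMap.fst R (∀ j, H j) ℂ).comp
        ((LinearMap.snd R H₀ ((∀ j, H j) × ℂ)).comp
          (g.comp (LinearMap.inl R H₀ ((∀ j, H j) × ℂ))))))
      have h1 := LinearMap.congr_fun hz x
      simpa using h1
    have hq2 : ∀ x : H₀, (g (x, 0)).2.2 = 0 := by
      intro x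
      have hz := hzero₀c ((LinearMap.snd R (∀ j, H j) ℂ).comp
        ((LinearMap.snd R H₀ ((∀ j, H j) × ℂ)).comp
          (g.comp (LinearMap.inl R H₀ ((∀ j, H j) × ℂ)))))
      have h1 := LinearMap.congr_fun hz x
      simpa using h1
    have hpy : ∀ (y : ∀ j, H j), (g (0, (y, 0))).1 = 0 := by
      intro y
      set Φ : (∀ j, H j) →ₗ[R] H₀ := (LinearMap.fst R H₀ ((∀ j, H j) × ℂ)).comp
        (g.comp ((LinearMap.inr R H₀ ((∀ j, H j) × ℂ)).comp
          (LinearMap.inl R (∀ j, H j) ℂ))) with hΦ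
    -- each component of Φ vanishes
      have hΦi : ∀ i (z : H i), Φ (Pi.single i z) = 0 := by
        intro i z
        have hz := hzeroI₀ i (Φ.comp (LinearMap.single R H i))
        have h1 := LinearMap.congr_fun hz z
        simpa using h1
      have h2 : Φ y = 0 := by
        have h3 : y = ∑ j, Pi.single j (y j) := (Finset.univ_sum_single y).symm
        rw [h3, map_sum]
        exact Finset.sum_eq_zero fun j _ => hΦi j (y j)
      simpa [hΦ] using h2
    have hpc : ∀ w : ℂ, (g (0, (0, w))).1 = 0 := by
      intro w
      have hz := hzeroc₀ ((LinearMap.fst R H₀ ((∀ j, H j) × ℂ)).comp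
        (g.comp ((LinearMap.inr R H₀ ((∀ j, H j) × ℂ)).comp (LinearMap.inr R (∀ j, H j) ℂ))))
      have h1 := LinearMap.congr_fun hz w
      simpa using h1
    have hP : ∀ yw : (∀ j, H j) × ℂ, (g (0, yw)).1 = 0 := by
      intro yw
      have h1 : ((0 : H₀), yw) = ((0 : H₀), (yw.1, 0)) + ((0 : H₀), ((0 : ∀ j, H j), yw.2)) := by
        simp
      rw [h1, map_add]
      show (g (0, (yw.1, 0))).1 + (g (0, (0, yw.2))).1 = 0
      rw [hpy yw.1, hpc yw.2, add_zero]
    -- now compute both sides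
    have e1 : g v = g (v.1, 0) + g (0, v.2) := by
      rw [← map_add]
      congr
      simp
    rw [e1, map_add]
    have e2 : f (g (0, v.2)) = 0 := by
      show ((c ((g (0, v.2)).1) : H₀), (0 : (∀ j, H j) × ℂ)) = 0
      rw [hP v.2]
      simp
    rw [e2, add_zero]
    have e3 : g (c v.1, 0) = (μ • c v.1, 0) := by
      refine Prod.ext_iff.mpr ⟨?_, Prod.ext_iff.mpr ⟨?_, ?_⟩⟩
      · exact hp (c v.1)
      · funext i
        exact hq1 i (c v.1)
      · exact hq2 (c v.1)
    show ((c ((g (v.1, 0)).1) : H₀), (0 : (∀ j, H j) × ℂ)) = g (c v.1, 0)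
    rw [e3, hp v.1, map_smul]
  -- apply the density theorem to a basis
  let b := Module.finBasis ℂ (H₀ × ((∀ i, H i) × ℂ))
  obtain ⟨r, hr⟩ := aux_density (R := R) f hf (fun k => b k)
  -- upgrade from the basis to all vectors
  have hsmulV : ∀ (z : ℂ) (v : H₀ × ((∀ i, H i) × ℂ)), r • (z • v) = z • (r • v) := by
    intro z v
    refine Prod.ext_iff.mpr ⟨hcomm₀ z r v.1, Prod.ext_iff.mpr ⟨?_, hcommc z r v.2.2⟩⟩
    funext i
    exact hcommI i z r (v.2.1 i)
  let L1 : (H₀ × ((∀ i, H i) × ℂ)) →ₗ[ℂ] (H₀ × ((∀ i, H i) × ℂ)) :=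
    { toFun := fun v => (c v.1, 0)
      map_add' := fun v w => by simp [Prod.ext_iff]
      map_smul' := fun z v => by simp [Prod.ext_iff] }
  let L2 : (H₀ × ((∀ i, H i) × ℂ)) →ₗ[ℂ] (H₀ × ((∀ i, H i) × ℂ)) :=
    { toFun := fun v => r • v
      map_add' := fun v w => smul_add r v w
      map_smul' := fun z v => hsmulV z v }
  have hL : L1 = L2 := b.ext fun k => hr k
  have hall : ∀ v : H₀ × ((∀ i, H i) × ℂ), (c v.1, (0 : (∀ i, H i) × ℂ)) = r • v :=
    fun v => LinearMap.congr_fun hL v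
  -- the scalar part of r vanishes
  have hz1 : ρc r 1 = 0 := by
    have h1 := hall ((0 : H₀), ((0 : ∀ i, H i), (1 : ℂ)))
    have h2 := congrArg (fun p : H₀ × ((∀ i, H i) × ℂ) => p.2.2) h1
    have h3 : (0 : ℂ) = r • (1 : ℂ) := by simpa using h2
    rw [hsc] at h3
    exact h3.symm
  have hsplit : ρc r = algebraMap ℂ (ℂ →L[ℂ] ℂ) r.fst := by
    conv_lhs => rw [← Unitization.inl_fst_add_inr_snd_eq r]
    rw [map_add, show (Unitization.inl r.fst : R) = algebraMap ℂ R r.fst from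
      congrFun (Unitization.algebraMap_eq_inl (R := ℂ) (A := A)).symm r.fst, AlgHomClass.commutes,
      hactc r.snd, add_zero]
  have hfst : r.fst = 0 := by
    have h1 := congrArg (fun T : ℂ →L[ℂ] ℂ => T 1) hsplit
    simp only [hz1] at h1
    simpa [Algebra.algebraMap_eq_smul_one] using h1.symm
  have hrb : r = (r.snd : R) := by
    conv_lhs => rw [← Unitization.inl_fst_add_inr_snd_eq r]
    rw [hfst]
    simp
  refine ⟨r.snd, ?_, ?_⟩
  · ext x
    have h1 := congrArg Prod.fst (hall (x, 0))
    have h2 : c x = ρ₀ r x := by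
      rw [← hs₀]
      simpa using h1
    rw [show π₀ r.snd = ρ₀ (r.snd : R) from (hact₀ r.snd).symm, ← hrb, ← h2]
  · intro i
    ext y
    have h1 := congrArg (fun p : H₀ × ((∀ j, H j) × ℂ) => p.2.1 i)
      (hall ((0 : H₀), ((Pi.single i y : ∀ j, H j), (0 : ℂ))))
    have h2 : (0 : H i) = r • (Pi.single i y i : H i) := by simpa using h1
    rw [Pi.single_eq_same, hsI] at h2
    rw [show π i r.snd = ρ i (r.snd : R) from (hactI i r.snd).symm, ← hrb]
    simpa using h2.symm
end

section
/- Let A be a residually finite dimensional C*-algebra. Then its multiplier algebra M(A) is residually finite dimensional. -/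
open scoped MultiplierAlgebra

open scoped Matrix

namespace RFDProof

lemma pointwise_bound (r t : ℝ) (hr : 0 < r) :
    |t * (1 - t ^ 2 / (t ^ 2 + r ^ 2)) ^ 2| ≤ r / 2 := by
  have hden : 0 < t ^ 2 + r ^ 2 := by positivity
  have h1 : 1 - t ^ 2 / (t ^ 2 + r ^ 2) = r ^ 2 / (t ^ 2 + r ^ 2) := by field_simp; ring
  rw [h1, abs_mul, abs_of_nonneg (by positivity : (0:ℝ) ≤ (r ^ 2 / (t ^ 2 + r ^ 2)) ^ 2), div_pow,
    mul_div_assoc', div_le_iff₀ (by positivity)]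
  have h2 : 2 * r * |t| ≤ t ^ 2 + r ^ 2 := by
    nlinarith [sq_nonneg (|t| - r), sq_abs t]
  have h3a : (2 * r * |t|) * r ^ 2 ≤ (2 * r * |t|) * (t ^ 2 + r ^ 2) := by
    have : (0:ℝ) ≤ 2 * r * |t| := by positivity
    nlinarith [sq_nonneg t]
  have h3b : (2 * r * |t|) * (t ^ 2 + r ^ 2) ≤ (t ^ 2 + r ^ 2) * (t ^ 2 + r ^ 2) :=
    mul_le_mul_of_nonneg_right h2 hden.le
  nlinarith [h3a.trans h3b, hr.le, abs_nonneg t]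

variable {A : Type*} [NonUnitalCStarAlgebra A]

lemma approx (c : A) {r : ℝ} (hr : 0 < r) :
    ‖c - c * cfcₙ (fun t : ℝ => t ^ 2 / (t ^ 2 + r ^ 2)) (star c * c)‖ ≤
      Real.sqrt (r / 2) := by
  set g : ℝ → ℝ := fun t => t ^ 2 / (t ^ 2 + r ^ 2) with hg_def
  have hgc : Continuous g := by
    apply Continuous.div (by fun_prop) (by fun_prop)
    intro x; positivity
  have hg0 : g 0 = 0 := by simp [hg_def]
  set s : A := star c * c with hs_def
  have hs : IsSelfAdjoint s := IsSelfAdjoint.star_mul_self c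
  set d : A := cfcₙ g s with hd_def
  have hd : IsSelfAdjoint d := cfcₙ_predicate g s
  have hid : ContinuousOn (fun t : ℝ => t) (quasispectrum ℝ s) := continuousOn_id
  have hgon : ContinuousOn g (quasispectrum ℝ s) := hgc.continuousOn
  have h_sd : s * d = cfcₙ (fun t : ℝ => t * g t) s := by
    rw [cfcₙ_mul _ _ s hid rfl hgon hg0, cfcₙ_id' ℝ s hs]
  have h_ds : d * s = cfcₙ (fun t : ℝ => g t * t) s := by
    rw [cfcₙ_mul _ _ s hgon hg0 hid rfl, cfcₙ_id' ℝ s hs]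
  have h_dsd : d * (s * d) = cfcₙ (fun t : ℝ => g t * (t * g t)) s := by
    rw [cfcₙ_mul g (fun t : ℝ => t * g t) s hgon hg0 (hid.mul hgon) (by simp [hg0]), ← h_sd]
  have expand : star (c - c * d) * (c - c * d)
      = s - s * d - (d * s - d * (s * d)) := by
    rw [star_sub, star_mul, hd.star_eq]
    simp only [sub_mul, mul_sub, mul_assoc, hs_def]
    abel
  have hGeq : cfcₙ (fun t : ℝ => t * (1 - g t) ^ 2) s = star (c - c * d) * (c - c * d) := by
    rw [expand]
    have c2 : ContinuousOn (fun t : ℝ => t - t * g t) (quasispectrum ℝ s) :=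
      hid.sub (hid.mul hgon)
    have c3 : ContinuousOn (fun t : ℝ => g t * t - g t * (t * g t)) (quasispectrum ℝ s) :=
      (hgon.mul hid).sub (hgon.mul (hid.mul hgon))
    calc cfcₙ (fun t : ℝ => t * (1 - g t) ^ 2) s
        = cfcₙ (fun t : ℝ => (t - t * g t) - (g t * t - g t * (t * g t))) s :=
          cfcₙ_congr (fun t _ => by ring)
      _ = cfcₙ (fun t : ℝ => t - t * g t) s
            - cfcₙ (fun t : ℝ => g t * t - g t * (t * g t)) s :=
          cfcₙ_sub _ _ _ c2 (by simp [hg0]) c3 (by simp [hg0])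
      _ = (cfcₙ (fun t : ℝ => t) s - cfcₙ (fun t : ℝ => t * g t) s)
            - (cfcₙ (fun t : ℝ => g t * t) s - cfcₙ (fun t : ℝ => g t * (t * g t)) s) := by
          rw [cfcₙ_sub (fun t : ℝ => t) (fun t : ℝ => t * g t) s hid rfl (hid.mul hgon) (by simp [hg0]),
            cfcₙ_sub (fun t : ℝ => g t * t) (fun t : ℝ => g t * (t * g t)) s (hgon.mul hid) (by simp [hg0]) (hgon.mul (hid.mul hgon)) (by simp [hg0])]
      _ = s - s * d - (d * s - d * (s * d)) := by
          rw [cfcₙ_id' ℝ s hs, ← h_sd, ← h_ds, ← h_dsd]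
  have hnorm : ‖cfcₙ (fun t : ℝ => t * (1 - g t) ^ 2) s‖ ≤ r / 2 :=
    norm_cfcₙ_le (fun t _ => by
      rw [Real.norm_eq_abs]; exact pointwise_bound r t hr)
  have hsq : ‖c - c * d‖ * ‖c - c * d‖ ≤ r / 2 := by
    calc ‖c - c * d‖ * ‖c - c * d‖ = ‖star (c - c * d) * (c - c * d)‖ :=
          (CStarRing.norm_star_mul_self).symm
      _ = ‖cfcₙ (fun t : ℝ => t * (1 - g t) ^ 2) s‖ := by rw [hGeq]
      _ ≤ r / 2 := hnorm
  exact (Real.le_sqrt (norm_nonneg _) (by positivity)).mpr (by rw [sq]; exact hsq)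

lemma fst_mul_apply (y : 𝓜(ℂ, A)) (a b : A) : y.fst (a * b) = y.fst a * b := by
  have key : ∀ z : A, z * (y.fst (a * b) - y.fst a * b) = 0 := by
    intro z
    have h1 := y.central z (a * b)
    have h2 := y.central z a
    calc z * (y.fst (a * b) - y.fst a * b)
        = z * y.fst (a * b) - (z * y.fst a) * b := by rw [mul_sub, mul_assoc]
      _ = y.snd z * (a * b) - (y.snd z * a) * b := by rw [h1, h2]
      _ = 0 := by rw [← mul_assoc, sub_self]
  have h0 := key (star (y.fst (a * b) - y.fst a * b))
  have := CStarRing.star_mul_self_eq_zero_iff (y.fst (a * b) - y.fst a * b) |>.mp h0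
  rwa [sub_eq_zero] at this

lemma exists_fst_ne (x : 𝓜(ℂ, A)) (hx : x ≠ 0) : ∃ a : A, x.fst a ≠ 0 := by
  by_contra h
  push_neg at h
  have hfst : x.fst = 0 := ContinuousLinearMap.ext h
  exact hx <| norm_eq_zero.mp (by rw [← DoubleCentralizer.norm_fst, hfst, norm_zero])


variable {A : Type*} [NonUnitalCStarAlgebra A] {n : ℕ}

/-- iterated product: `upow u k = u ^ (k+1)` in a non-unital ring. -/
def upow (u : A) : ℕ → A
  | 0 => u
  | (k + 1) => u * upow u k

lemma map_upow (π : A →⋆ₙₐ[ℂ] Matrix (Fin n) (Fin n) ℂ) (u : A) (k : ℕ) :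
    π (upow u k) = (π u) ^ (k + 1) := by
  induction k with
  | zero => simp [upow]
  | succ k ih => rw [upow, map_mul, ih, ← pow_succ']

lemma map_real_smul (π : A →⋆ₙₐ[ℂ] Matrix (Fin n) (Fin n) ℂ) (r : ℝ) (a : A) :
    π (r • a) = r • π a := by
  have h1 : r • a = ((r : ℂ)) • a := by
    rw [← smul_one_smul ℂ r a, Complex.real_smul, mul_one]
  have h2 : r • π a = ((r : ℂ)) • π a := by
    rw [← smul_one_smul ℂ r (π a), Complex.real_smul, mul_one]
  rw [h1, h2, map_smul]

lemma eq_zero_of_forall_mulVec (y : Matrix (Fin n) (Fin n) ℂ)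
    (hy : ∀ v, y.mulVec v = 0) : y = 0 := by
  ext i j
  have := congrFun (hy (Pi.single j 1)) i
  simpa [Matrix.mulVec_single] using this

lemma exists_unit (π : A →⋆ₙₐ[ℂ] Matrix (Fin n) (Fin n) ℂ) :
    ∃ e : Matrix (Fin n) (Fin n) ℂ, (∃ a₀ : A, π a₀ = e) ∧ star e = e ∧
      (∀ a : A, π a * e = π a) ∧ (∀ a : A, e * π a = π a) := by
  classical
  let πₗ : A →ₗ[ℂ] Matrix (Fin n) (Fin n) ℂ :=
    { toFun := π, map_add' := fun a b => map_add π a b, map_smul' := fun c a => map_smul π c a }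
  obtain ⟨t, ht⟩ : (LinearMap.range πₗ).FG := IsNoetherian.noetherian _
  have htS : ∀ v ∈ t, ∃ a : A, π a = v := by
    intro v hv
    have hvS : v ∈ LinearMap.range πₗ := ht ▸ Submodule.subset_span hv
    obtain ⟨a, ha⟩ := hvS
    exact ⟨a, ha⟩
  choose w hw using htS
  set u : A := ∑ p ∈ t.attach, star (w p.1 p.2) * w p.1 p.2 with hu
  set h : Matrix (Fin n) (Fin n) ℂ := π u with hh
  have hhu : h = ∑ p ∈ t.attach, star p.1 * p.1 := by
    rw [hh, hu, map_sum]
    exact Finset.sum_congr rfl fun p _ => by rw [map_mul, map_star, hw]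
  have hherm : IsSelfAdjoint h := by
    rw [hhu]
    simp only [IsSelfAdjoint, star_sum, star_mul, star_star]
  -- kernel property
  have hker : ∀ v : Fin n → ℂ, h.mulVec v = 0 → ∀ a : A, (π a).mulVec v = 0 := by
    intro v hv a
    have hsum : h *ᵥ v = ∑ p ∈ t.attach, (star p.1 * p.1) *ᵥ v := by
      rw [hhu]; ext i
      simp only [Matrix.mulVec, dotProduct, Matrix.sum_apply, Finset.sum_apply,
        Finset.sum_mul]
      rw [Finset.sum_comm]
    have hterm : ∀ p : {x // x ∈ t},
        dotProduct (star v) ((star p.1 * p.1) *ᵥ v)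
          = dotProduct (star (p.1 *ᵥ v)) (p.1 *ᵥ v) := by
      intro p
      rw [← Matrix.mulVec_mulVec, Matrix.dotProduct_mulVec, Matrix.star_eq_conjTranspose,
        ← Matrix.star_mulVec]
    have h0 : ∑ p ∈ t.attach,
        dotProduct (star (p.1 *ᵥ v)) (p.1 *ᵥ v) = 0 := by
      rw [← Finset.sum_congr rfl fun p _ => hterm p]
      have hz : dotProduct (star v) (h *ᵥ v) = 0 := by rw [hv, dotProduct_zero]
      have hsw : dotProduct (star v) (∑ p ∈ t.attach, (star p.1 * p.1) *ᵥ v)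
          = ∑ p ∈ t.attach, dotProduct (star v) ((star p.1 * p.1) *ᵥ v) := by
        simp only [dotProduct, Matrix.sum_apply, Finset.sum_apply, Finset.mul_sum,
          Finset.sum_mul, Matrix.mulVec]
        rw [Finset.sum_comm]
      rw [← hsw, ← hsum, hz]
    -- convert to real sums
    have hreal : ∀ p : {x // x ∈ t},
        dotProduct (star (p.1 *ᵥ v)) (p.1 *ᵥ v)
          = ((∑ i, Complex.normSq ((p.1 *ᵥ v) i) : ℝ) : ℂ) := by
      intro p
      rw [dotProduct]
      push_cast
      exact Finset.sum_congr rfl fun i _ => by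
        rw [Pi.star_apply, Complex.star_def, mul_comm, Complex.mul_conj]
    have hzero : ∀ p : {x // x ∈ t}, p.1 *ᵥ v = 0 := by
      have h1 : ∑ p ∈ t.attach, (∑ i, Complex.normSq ((p.1 *ᵥ v) i) : ℝ) = 0 := by
        have := h0
        rw [Finset.sum_congr rfl fun p _ => hreal p] at this
        exact_mod_cast this
      intro p
      have h2 : ∀ q ∈ t.attach, (0:ℝ) ≤ ∑ i, Complex.normSq ((q.1 *ᵥ v) i) :=
        fun q _ => Finset.sum_nonneg fun i _ => Complex.normSq_nonneg _
      have h3 := (Finset.sum_eq_zero_iff_of_nonneg h2).mp h1 p (Finset.mem_attach t p)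
      funext i
      have h4 : ∀ i ∈ Finset.univ, (0:ℝ) ≤ Complex.normSq ((p.1 *ᵥ v) i) :=
        fun i _ => Complex.normSq_nonneg _
      have h5 := (Finset.sum_eq_zero_iff_of_nonneg h4).mp h3 i (Finset.mem_univ i)
      simpa using Complex.normSq_eq_zero.mp h5
    have haS : π a ∈ Submodule.span ℂ (t : Set (Matrix (Fin n) (Fin n) ℂ)) := by
      rw [ht]; exact ⟨a, rfl⟩
    refine Submodule.span_induction (fun y hy => hzero ⟨y, hy⟩) (by simp)
      (fun y z _ _ hy hz => by rw [Matrix.add_mulVec, hy, hz, add_zero])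
      (fun c y _ hy => by rw [Matrix.smul_mulVec, hy, smul_zero]) haS
  -- the polynomial support projection
  have hfin : (spectrum ℝ h).Finite := Matrix.finite_real_spectrum
  set s0 : Finset ℝ := insert 0 hfin.toFinset with hs0
  set rfun : ℝ → ℝ := fun x => if x = 0 then 0 else 1 with hrfun
  set P : Polynomial ℝ := Lagrange.interpolate s0 id rfun with hP
  have hPnode : ∀ μ ∈ s0, P.eval μ = rfun μ := by
    intro μ hμ
    simpa [hP] using Lagrange.eval_interpolate_at_node rfun (Set.injOn_id _) hμ
  have hP0 : P.eval 0 = 0 := by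
    rw [hPnode 0 (Finset.mem_insert_self _ _)]; simp [hrfun]
  have hspec : ∀ μ ∈ spectrum ℝ h, μ ∈ s0 :=
    fun μ hμ => Finset.mem_insert_of_mem (hfin.mem_toFinset.mpr hμ)
  set e : Matrix (Fin n) (Fin n) ℂ := Polynomial.aeval h P with he
  have hPc : Continuous fun x : ℝ => P.eval x := P.continuous
  have hhe : h * e = h := by
    have h1 : e = cfc (fun x : ℝ => P.eval x) h := by
      rw [he, cfc_polynomial P h hherm]
    calc h * e = cfc (id : ℝ → ℝ) h * cfc (fun x : ℝ => P.eval x) h := by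
          rw [cfc_id ℝ h hherm, ← h1]
      _ = cfc (fun x : ℝ => id x * P.eval x) h :=
          (cfc_mul _ _ h continuousOn_id hPc.continuousOn).symm
      _ = cfc (id : ℝ → ℝ) h := cfc_congr (fun μ hμ => by
            by_cases h0 : μ = 0
            · simp [h0]
            · have := hPnode μ (hspec μ hμ)
              simp only [id_eq, this, hrfun]
              rw [if_neg h0, mul_one])
      _ = h := cfc_id ℝ h hherm
  -- e is in the range of π
  obtain ⟨a₀, ha₀⟩ : ∃ a₀ : A, π a₀ = e := by
    refine ⟨∑ k ∈ Finset.range (P.natDegree + 1),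
      if k = 0 then 0 else P.coeff k • upow u (k - 1), ?_⟩
    rw [map_sum, he, Polynomial.aeval_eq_sum_range]
    refine Finset.sum_congr rfl fun k _ => ?_
    by_cases hk : k = 0
    · subst hk
      simp [Polynomial.coeff_zero_eq_eval_zero, hP0]
    · rw [if_neg hk, map_real_smul, map_upow, ← hh]
      congr 2
      rw [Nat.sub_add_cancel (Nat.one_le_iff_ne_zero.mpr hk)]
  -- right unit
  have hRU : ∀ a : A, π a * e = π a := by
    intro a
    have hz : π a * (1 - e) = 0 := by
      apply eq_zero_of_forall_mulVec
      intro v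
      rw [← Matrix.mulVec_mulVec]
      apply hker
      rw [Matrix.mulVec_mulVec, mul_sub, mul_one, hhe, sub_self, Matrix.zero_mulVec]
    rw [mul_sub, mul_one, sub_eq_zero] at hz
    exact hz.symm
  -- left unit and star
  have hLU' : ∀ a : A, star e * π a = π a := by
    intro a
    have h1 := hRU (star a)
    have h2 := congrArg star h1
    rwa [star_mul, ← map_star π, star_star] at h2
  have hse : star e = e := by
    have h1 := hLU' a₀
    rw [ha₀] at h1
    have h2 : star e * e = star e := by
      have := hRU (star a₀)
      rwa [map_star, ha₀] at this
    exact h2.symm.trans h1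
  refine ⟨e, ⟨a₀, ha₀⟩, hse, hRU, fun a => ?_⟩
  rw [← hse]; exact hLU' a

open scoped Matrix.Norms.L2Operator in
noncomputable instance mat_cstar (n : ℕ) : CStarAlgebra (Matrix (Fin n) (Fin n) ℂ) where

open scoped Matrix.Norms.L2Operator CStarAlgebra in
lemma ker_stable {n : ℕ} (π : A →⋆ₙₐ[ℂ] Matrix (Fin n) (Fin n) ℂ) (y : 𝓜(ℂ, A)) (c : A)
    (hc : π c = 0) : π (y.fst c) = 0 := by
  have hs : IsSelfAdjoint (star c * c) := IsSelfAdjoint.star_mul_self c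
  have hbound : ∀ r : ℝ, 0 < r → ‖π (y.fst c)‖ ≤ ‖y.fst‖ * Real.sqrt (r / 2) := by
    intro r hr
    set g : ℝ → ℝ := fun t => t ^ 2 / (t ^ 2 + r ^ 2) with hg_def
    have hgc : Continuous g := by
      apply Continuous.div (by fun_prop) (by fun_prop)
      intro x; positivity
    have hg0 : g 0 = 0 := by simp [hg_def]
    set d : A := cfcₙ g (star c * c) with hd_def
    have hπs : π (star c * c) = 0 := by rw [map_mul, hc, mul_zero]
    have hπd : π d = 0 := by
      rw [hd_def, π.map_cfcₙ g (star c * c) hgc.continuousOn hg0 (map_continuous π) hs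
        (hs.map π), hπs, cfcₙ_apply_zero]
    have hkey : π (y.fst c) = π (y.fst (c - c * d)) := by
      have : y.fst (c - c * d) = y.fst c - y.fst c * d := by
        rw [map_sub, fst_mul_apply]
      rw [this, map_sub, map_mul, hπd, mul_zero, sub_zero]
    rw [hkey]
    calc ‖π (y.fst (c - c * d))‖ ≤ ‖y.fst (c - c * d)‖ :=
          NonUnitalStarAlgHom.norm_apply_le π _
      _ ≤ ‖y.fst‖ * ‖c - c * d‖ := (y.fst).le_opNorm _
      _ ≤ ‖y.fst‖ * Real.sqrt (r / 2) :=
          mul_le_mul_of_nonneg_left (approx c hr) (norm_nonneg _)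
  have hlim : Filter.Tendsto (fun r : ℝ => ‖y.fst‖ * Real.sqrt (r / 2))
      (nhdsWithin 0 (Set.Ioi 0)) (nhds 0) := by
    have hcont : Continuous fun r : ℝ => ‖y.fst‖ * Real.sqrt (r / 2) := by fun_prop
    have := hcont.tendsto 0
    simp only [Real.sqrt_eq_zero', zero_div, Real.sqrt_zero, mul_zero] at this
    exact tendsto_nhdsWithin_of_tendsto_nhds this
  have hle : ‖π (y.fst c)‖ ≤ 0 :=
    ge_of_tendsto hlim (eventually_nhdsWithin_of_forall (fun r hr => hbound r hr))
  simpa using norm_le_zero_iff.mp hle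


end RFDProof

open RFDProof in
/-- Let `A` be a residually finite dimensional C*-algebra.  Then its
multiplier algebra `M(A)` is residually finite dimensional.  (A C*-algebra `B` is
residually finite dimensional if for every nonzero `b : B` there is a
*-homomorphism into a finite-dimensional C*-algebra, i.e. a matrix algebra,
which does not kill `b`.) -/
theorem multiplier_algebra_residually_finite_dimensional
    {A : Type*} [NonUnitalCStarAlgebra A]
    (hA : ∀ a : A, a ≠ 0 →
      ∃ (n : ℕ) (π : A →⋆ₙₐ[ℂ] Matrix (Fin n) (Fin n) ℂ), π a ≠ 0) :
    ∀ x : 𝓜(ℂ, A), x ≠ 0 →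
      ∃ (n : ℕ) (π : 𝓜(ℂ, A) →⋆ₙₐ[ℂ] Matrix (Fin n) (Fin n) ℂ), π x ≠ 0 := by
  intro x hx
  obtain ⟨a, ha⟩ := exists_fst_ne x hx
  obtain ⟨n, π, hπ⟩ := hA (x.fst a) ha
  obtain ⟨e, ⟨a₀, ha₀⟩, hse, hRU, hLU⟩ := exists_unit π
  have hLUe : ∀ c : A, π (a₀ * c) = π c := fun c => by rw [map_mul, ha₀, hLU]
  have hfst_congr : ∀ (y : 𝓜(ℂ, A)) (c : A), π (y.fst (a₀ * c)) = π (y.fst c) := by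
    intro y c
    have h1 : π (a₀ * c - c) = 0 := by rw [map_sub, hLUe, sub_self]
    have h2 := ker_stable π y _ h1
    rw [map_sub, map_sub, sub_eq_zero] at h2
    exact h2
  refine ⟨n, {
    toFun := fun y => π (y.fst a₀)
    map_smul' := fun c y => by
      show π ((c • y).fst a₀) = c • π (y.fst a₀)
      rw [DoubleCentralizer.smul_fst, ContinuousLinearMap.smul_apply, map_smul]
    map_zero' := by
      show π ((0 : 𝓜(ℂ, A)).fst a₀) = 0
      rw [DoubleCentralizer.zero_fst]; simp
    map_add' := fun y z => by
      show π ((y + z).fst a₀) = π (y.fst a₀) + π (z.fst a₀)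
      rw [DoubleCentralizer.add_fst, ContinuousLinearMap.add_apply, map_add]
    map_mul' := fun y z => by
      show π ((y * z).fst a₀) = π (y.fst a₀) * π (z.fst a₀)
      rw [DoubleCentralizer.mul_fst, ContinuousLinearMap.mul_apply, ← hfst_congr y (z.fst a₀),
        fst_mul_apply, map_mul]
    map_star' := fun y => by
      show π ((star y).fst a₀) = star (π (y.fst a₀))
      rw [DoubleCentralizer.star_fst, map_star]
      congr 1
      calc π (y.snd (star a₀)) = π (y.snd (star a₀)) * e := (hRU _).symm
        _ = π (y.snd (star a₀) * a₀) := by rw [map_mul, ha₀]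
        _ = π (star a₀ * y.fst a₀) := by rw [y.central (star a₀) a₀]
        _ = star e * π (y.fst a₀) := by rw [map_mul, map_star, ha₀]
        _ = π (y.fst a₀) := by rw [hse, hLU] }, ?_⟩
  intro h0
  have h0' : π (x.fst a₀) = 0 := h0
  have key : π (x.fst a₀) * π a = π (x.fst a) := by
    rw [← map_mul, ← fst_mul_apply, hfst_congr]
  apply hπ
  rw [← key, h0', zero_mul]
end

section
/- Let G be a residually finite discrete amenable group, let b = Σ_{g∈S} β_g u_g be a finite linear combination of group unitaries in C*_r(G), and let ξ = Σ_{g∈T} α_g δ_g ∈ ℓ²(G) be finitely supported with ‖ξ‖ = 1. If N is a finite-index normal subgroup of G such that the quotient map G → G/N is injective on the finite set ST = {gh : g ∈ S, h ∈ T}, then with π the representation of C*(G) induced by the regular representation of G/N and η = Σ_{g∈T} α_g δ_{gN}, one has ‖π(b)η‖ = ‖bξ‖. -/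
open scoped Pointwise
attribute [local instance] Classical.propDecidable

/-- Amenability of a discrete group, via the Følner condition. -/
def IsAmenableFolner (G : Type*) [Group G] : Prop :=
  ∀ ε : ℝ, 0 < ε → ∀ S : Finset G, ∃ F : Finset G, F.Nonempty ∧
    ∀ g ∈ S, (((g • (F : Set G)) \ (F : Set G)).ncard : ℝ) ≤ ε * F.card

/-- Residual finiteness of a discrete group. -/
def IsResiduallyFiniteGroup (G : Type*) [Group G] : Prop :=
  ∀ g : G, g ≠ 1 → ∃ N : Subgroup G, N.Normal ∧ N.FiniteIndex ∧ g ∉ N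

/-- Let `G` be a residually finite discrete amenable group, let
`b = Σ_{g ∈ S} β_g u_g` be a finite linear combination of group unitaries in
`C*_r(G)`, and let `ξ = Σ_{g ∈ T} α_g δ_g ∈ ℓ²(G)` be finitely supported with
`‖ξ‖ = 1`.  If `N` is a finite-index normal subgroup of `G` such that the
quotient map `G → G/N` is injective on `S * T`, then, with `π` the representation
induced by the regular representation of `G/N` and `η = Σ_{g ∈ T} α_g δ_{gN}`,
one has `‖π(b) η‖ = ‖b ξ‖`.  Both sides are written out explicitly as `ℓ²`-norms:
`(b ξ)(k) = Σ_{g ∈ S} β_g ξ(g⁻¹ k)` and `(π(b) η)(c) = Σ_{g ∈ S} β_g η(g⁻¹ • c)`. -/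
theorem norm_preserved_under_finite_quotient_rep
    {G : Type*} [Group G]
    (hamen : IsAmenableFolner G) (hrf : IsResiduallyFiniteGroup G)
    (S T : Finset G) (β α : G → ℂ)
    (hξnorm : ∑ g ∈ T, ‖α g‖ ^ 2 = 1)
    (N : Subgroup G) (hN : N.Normal) (hNf : N.FiniteIndex)
    (hinj : Set.InjOn (QuotientGroup.mk : G → G ⧸ N) ((S * T : Finset G) : Set G)) :
    ∑' c : G ⧸ N,
        ‖∑ g ∈ S, β g *
          (∑ h ∈ T, if (QuotientGroup.mk h : G ⧸ N) = g⁻¹ • c then α h else 0)‖ ^ 2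
      = ∑' k : G,
        ‖∑ g ∈ S, β g * (∑ h ∈ T, if h = g⁻¹ * k then α h else 0)‖ ^ 2 := by
  classical
  set K : Finset G := S * T with hK
  -- RHS is supported on K
  have hsupp₂ : ∀ k ∉ K,
      (‖∑ g ∈ S, β g * (∑ h ∈ T, if h = g⁻¹ * k then α h else 0)‖ ^ 2 : ℝ) = 0 := by
    intro k hk
    have : ∑ g ∈ S, β g * (∑ h ∈ T, if h = g⁻¹ * k then α h else 0) = 0 := by
      refine Finset.sum_eq_zero fun g hg => ?_
      have : (∑ h ∈ T, if h = g⁻¹ * k then α h else 0) = 0 := by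
        refine Finset.sum_eq_zero fun h hh => ?_
        rw [if_neg]
        intro hhk
        apply hk
        have : k = g * h := by rw [hhk]; group
        rw [this, hK]; exact Finset.mul_mem_mul hg hh
      rw [this, mul_zero]
    rw [this, norm_zero]; norm_num
  -- LHS is supported on K.image mk
  have hsupp₁ : ∀ c ∉ K.image (QuotientGroup.mk : G → G ⧸ N),
      (‖∑ g ∈ S, β g *
        (∑ h ∈ T, if (QuotientGroup.mk h : G ⧸ N) = g⁻¹ • c then α h else 0)‖ ^ 2 : ℝ) = 0 := by
    intro c hc
    have : ∑ g ∈ S, β g *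
        (∑ h ∈ T, if (QuotientGroup.mk h : G ⧸ N) = g⁻¹ • c then α h else 0) = 0 := by
      refine Finset.sum_eq_zero fun g hg => ?_
      have : (∑ h ∈ T, if (QuotientGroup.mk h : G ⧸ N) = g⁻¹ • c then α h else 0) = 0 := by
        refine Finset.sum_eq_zero fun h hh => ?_
        rw [if_neg]
        intro hhk
        apply hc
        refine Finset.mem_image.mpr ⟨g * h, by rw [hK]; exact Finset.mul_mem_mul hg hh, ?_⟩
        have : (QuotientGroup.mk (g * h) : G ⧸ N) = g • (QuotientGroup.mk h : G ⧸ N) := rfl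
        rw [this, hhk, smul_smul, mul_inv_cancel, one_smul]
      rw [this, mul_zero]
    rw [this, norm_zero]; norm_num
  rw [tsum_eq_sum hsupp₁, tsum_eq_sum hsupp₂,
    Finset.sum_image (fun a ha b hb hab => hinj (by simpa using ha) (by simpa using hb) hab)]
  refine Finset.sum_congr rfl fun k hk => ?_
  congr 1
  refine congrArg _ (Finset.sum_congr rfl fun g hg => ?_)
  refine congrArg _ (Finset.sum_congr rfl fun h hh => ?_)
  congr 1
  have hsm : g⁻¹ • (QuotientGroup.mk k : G ⧸ N) = QuotientGroup.mk (g⁻¹ * k) := rfl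
  rw [hsm]
  apply propext
  constructor
  · intro heq
    have h1 : (QuotientGroup.mk (g * h) : G ⧸ N) = QuotientGroup.mk k := by
      have : (QuotientGroup.mk (g * h) : G ⧸ N) = g • (QuotientGroup.mk h : G ⧸ N) := rfl
      rw [this, heq]
      have : g • (QuotientGroup.mk (g⁻¹ * k) : G ⧸ N) = QuotientGroup.mk (g * (g⁻¹ * k)) := rfl
      rw [this]; congr 1; group
    have := hinj (by simpa using Finset.mul_mem_mul hg hh) (by simpa using hk) h1
    rw [← this]; group
  · intro heq
    rw [heq]
end

section
/- Let G be the group of finitely supported even permutations of a countably infinite set. Then G has no nontrivial finite-dimensional unitary representations. -/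
/-- The infinite alternating group: the subgroup of permutations of `ℕ` generated
by the `3`-cycles (equivalently, the group of finitely supported even
permutations of a countably infinite set). -/
def infiniteAlternatingGroup : Subgroup (Equiv.Perm ℕ) :=
  Subgroup.closure
    {σ : Equiv.Perm ℕ | ∃ a b c : ℕ, a ≠ b ∧ a ≠ c ∧ b ≠ c ∧
      σ = Equiv.swap a b * Equiv.swap a c}


open Module Function

noncomputable def ω3 : ℂ := Complex.exp (2 * Real.pi * Complex.I / 3)
lemma ω3_prim : IsPrimitiveRoot ω3 3 := Complex.isPrimitiveRoot_exp 3 (by norm_num)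
lemma ω3_pow : ω3 ^ 3 = 1 := ω3_prim.pow_eq_one
lemma ω3_ne_one : ω3 ≠ 1 := ω3_prim.ne_one (by norm_num)
lemma ω3_sum : 1 + ω3 + ω3 ^ 2 = 0 := by
  have h : (ω3 - 1) * (1 + ω3 + ω3 ^ 2) = 0 := by linear_combination ω3_pow
  rcases mul_eq_zero.1 h with h' | h'
  · exact absurd (sub_eq_zero.1 h') ω3_ne_one
  · exact h'

universe uV uA

lemma keyB (d : ℕ) : ∀ (V : Type uV) [AddCommGroup V] [Module ℂ V] [FiniteDimensional ℂ V],
    finrank ℂ V ≤ d → ∀ (A : Type uA) [CommGroup A], (∀ a : A, a ^ 3 = 1) →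
    ∀ (f : A →* (Module.End ℂ V)ˣ), Function.Injective f →
    Finite A ∧ Nat.card A ≤ 3 ^ finrank ℂ V := by
  induction d with
  | zero =>
    intro V _ _ _ hle A _ _ f hf
    have h0 : finrank ℂ V = 0 := Nat.le_zero.1 hle
    have : Subsingleton V := finrank_zero_iff.1 h0
    have hsub : Subsingleton A :=
      ⟨fun a b => hf (Units.ext (LinearMap.ext fun x => Subsingleton.elim _ _))⟩
    haveI : Unique A := ⟨⟨1⟩, fun a => Subsingleton.elim a 1⟩
    refine ⟨Finite.of_subsingleton, ?_⟩
    have h1 : Nat.card A = 1 := Nat.card_unique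
    have : 0 < 3 ^ finrank ℂ V := pow_pos (by norm_num) _
    omega
  | succ d ih =>
    intro V _ _ _ hle A _ h3 f hf
    by_cases hle' : finrank ℂ V ≤ d
    · exact ih V hle' A h3 f hf
    have hrank : finrank ℂ V = d + 1 := le_antisymm hle (by omega)
    haveI : Nontrivial V := Module.nontrivial_of_finrank_pos (R := ℂ) (by omega)
    obtain ⟨v₀, hv₀⟩ := exists_ne (0 : V)
    have hfpow3 : ∀ a : A, (f a : Module.End ℂ V) ^ 3 = 1 := fun a => by
      rw [← Units.val_pow_eq_pow_val, ← map_pow, h3 a, map_one, Units.val_one]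
    by_cases hscal : ∀ a : A, ∃ c : ℂ, (f a : Module.End ℂ V) = c • (1 : Module.End ℂ V)
    · choose c hc using hscal
      have hc3 : ∀ a : A, (c a) ^ 3 = 1 := by
        intro a
        have h1 := hfpow3 a
        rw [hc a] at h1
        have h2 : ((c a) ^ 3) • v₀ = v₀ := by
          have := LinearMap.congr_fun h1 v₀
          simpa [smul_smul, pow_succ, pow_zero, mul_comm] using this
        by_contra hne
        apply hv₀
        have h4 : ((c a) ^ 3 - 1) • v₀ = 0 := by rw [sub_smul, h2, one_smul, sub_self]
        rcases smul_eq_zero.1 h4 with h | h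
        · exact absurd (sub_eq_zero.1 h) hne
        · exact h
      have hcinj : Function.Injective c := fun a b hab =>
        hf (Units.ext (by rw [hc a, hc b, hab]))
      have hmem : ∀ a : A, c a ∈ ({1, ω3, ω3 ^ 2} : Finset ℂ) := by
        intro a
        have hz : (c a - 1) * ((c a - ω3) * (c a - ω3 ^ 2)) = 0 := by
          linear_combination (hc3 a) + (c a - (c a)^2) * ω3_sum + (c a - 1) * ω3_pow
        simp only [Finset.mem_insert, Finset.mem_singleton]
        rcases mul_eq_zero.1 hz with h | h
        · exact Or.inl (sub_eq_zero.1 h)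
        · rcases mul_eq_zero.1 h with h | h
          · exact Or.inr (Or.inl (sub_eq_zero.1 h))
          · exact Or.inr (Or.inr (sub_eq_zero.1 h))
      set gg : A → ({1, ω3, ω3 ^ 2} : Finset ℂ) := fun a => ⟨c a, hmem a⟩ with hgg
      have hginj : Function.Injective gg := fun a b hab => hcinj (congrArg Subtype.val hab)
      haveI : Finite A := Finite.of_injective gg hginj
      refine ⟨inferInstance, ?_⟩
      calc Nat.card A ≤ Nat.card ({1, ω3, ω3 ^ 2} : Finset ℂ) :=
            Nat.card_le_card_of_injective gg hginj
        _ = ({1, ω3, ω3 ^ 2} : Finset ℂ).card := by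
            rw [Nat.card_eq_fintype_card, Fintype.card_coe]
        _ ≤ 3 := (Finset.card_insert_le _ _).trans
            (Nat.succ_le_succ ((Finset.card_insert_le _ _).trans (by simp)))
        _ ≤ 3 ^ finrank ℂ V := by
            calc (3:ℕ) = 3 ^ 1 := (pow_one 3).symm
              _ ≤ 3 ^ finrank ℂ V := Nat.pow_le_pow_right (by norm_num) (by omega)
    · push_neg at hscal
      obtain ⟨a₀, ha₀⟩ := hscal
      set u : Module.End ℂ V := (f a₀ : Module.End ℂ V) with hu
      have hu3 : ∀ x : V, u (u (u x)) = x := by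
        intro x
        have := LinearMap.congr_fun (hfpow3 a₀) x
        simpa [pow_succ, Module.End.mul_apply] using this
      set E : ℂ → Submodule ℂ V := fun μ => LinearMap.ker (u - μ • (1 : Module.End ℂ V)) with hE
      have memE : ∀ (μ : ℂ) (x : V), x ∈ E μ ↔ u x = μ • x := by
        intro μ x
        simp [hE, LinearMap.mem_ker, LinearMap.sub_apply, LinearMap.smul_apply, sub_eq_zero]
      have span3 : ∀ x : V, ∃ x₁ ∈ E 1, ∃ x₂ ∈ E ω3, ∃ x₃ ∈ E (ω3 ^ 2), x = x₁ + x₂ + x₃ := by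
        intro x
        set y : ℂ → V := fun μ => (3:ℂ)⁻¹ • (x + μ • (u (u x)) + μ ^ 2 • (u x)) with hy
        have hymem : ∀ μ : ℂ, μ ^ 3 = 1 → y μ ∈ E μ := by
          intro μ hμ
          rw [memE]
          simp only [hy, map_smul, map_add, hu3]
          match_scalars
          · linear_combination (-(3:ℂ)⁻¹) * hμ
          · ring
          · ring
        have hω6 : (ω3 ^ 2) ^ 3 = 1 := by
          rw [← pow_mul, show 2*3 = 3*2 from rfl, pow_mul, ω3_pow, one_pow]
        refine ⟨y 1, hymem 1 (by norm_num), y ω3, hymem ω3 ω3_pow, y (ω3^2), hymem (ω3^2) hω6, ?_⟩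
        simp only [hy]
        match_scalars
        · ring
        · linear_combination (-(3:ℂ)⁻¹) * ω3_sum
        · linear_combination (-(3:ℂ)⁻¹) * ω3_sum - (3:ℂ)⁻¹ * ω3 * ω3_pow
      have indep : ∀ x₁ x₂ x₃ : V, x₁ ∈ E 1 → x₂ ∈ E ω3 → x₃ ∈ E (ω3 ^ 2) →
          x₁ + x₂ + x₃ = 0 → x₁ = 0 ∧ x₂ = 0 ∧ x₃ = 0 := by
        intro x₁ x₂ x₃ hm₁ hm₂ hm₃ h0
        rw [memE] at hm₁ hm₂ hm₃
        have h1 : x₁ + ω3 • x₂ + ω3 ^ 2 • x₃ = 0 := by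
          have := congrArg u h0
          rw [map_add, map_add, hm₁, hm₂, hm₃, map_zero, one_smul] at this
          exact this
        have h2 : x₁ + (ω3 * ω3) • x₂ + (ω3 ^ 2 * ω3 ^ 2) • x₃ = 0 := by
          have := congrArg u h1
          rw [map_add, map_add, map_smul, map_smul, hm₁, hm₂, hm₃, map_zero, one_smul,
            smul_smul, smul_smul] at this
          exact this
        refine ⟨?_, ?_, ?_⟩
        · have key : x₁ = (3:ℂ)⁻¹ • ((x₁ + x₂ + x₃) + (x₁ + ω3 • x₂ + ω3 ^ 2 • x₃)
              + (x₁ + (ω3 * ω3) • x₂ + (ω3 ^ 2 * ω3 ^ 2) • x₃)) := by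
            match_scalars
            · ring
            · linear_combination (-(3:ℂ)⁻¹) * ω3_sum
            · linear_combination (-(3:ℂ)⁻¹) * ω3_sum - (3:ℂ)⁻¹ * ω3 * ω3_pow
          rw [h0, h1, h2] at key
          simpa using key
        · have key : x₂ = (3:ℂ)⁻¹ • ((x₁ + x₂ + x₃) + ω3 ^ 2 • (x₁ + ω3 • x₂ + ω3 ^ 2 • x₃)
              + ω3 • (x₁ + (ω3 * ω3) • x₂ + (ω3 ^ 2 * ω3 ^ 2) • x₃)) := by
            match_scalars
            · linear_combination (-(2:ℂ)/3) * ω3_pow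
            · linear_combination (-(3:ℂ)⁻¹) * ω3_sum
            · linear_combination (-(3:ℂ)⁻¹) * ω3_sum + (-(3:ℂ)⁻¹ * ω3^2 - ω3/3) * ω3_pow
          rw [h0, h1, h2] at key
          simpa using key
        · have key : x₃ = (3:ℂ)⁻¹ • ((x₁ + x₂ + x₃) + ω3 • (x₁ + ω3 • x₂ + ω3 ^ 2 • x₃)
              + ω3 ^ 2 • (x₁ + (ω3 * ω3) • x₂ + (ω3 ^ 2 * ω3 ^ 2) • x₃)) := by
            match_scalars
            · linear_combination (-(2:ℂ)/3 - ω3^3/3) * ω3_pow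
            · linear_combination (-(3:ℂ)⁻¹) * ω3_sum + (ω3/3 - ω3/3) * ω3_pow
            · linear_combination (-(3:ℂ)⁻¹) * ω3_sum + (-(2:ℂ)/3 - ω3/3 + (2:ℂ)/3) * ω3_pow
          rw [h0, h1, h2] at key
          simpa using key
      have hinv : ∀ (μ : ℂ) (b : A) (x : V), x ∈ E μ → (f b : Module.End ℂ V) x ∈ E μ := by
        intro μ b x hx
        rw [memE] at hx ⊢
        have hcomu : ((f a₀ * f b : (Module.End ℂ V)ˣ) : Module.End ℂ V)
            = ((f b * f a₀ : (Module.End ℂ V)ˣ) : Module.End ℂ V) := by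
          rw [← map_mul, ← map_mul, mul_comm]
        have hcom := LinearMap.congr_fun hcomu x
        simp only [Units.val_mul, Module.End.mul_apply] at hcom
        have hcom' : u ((f b : Module.End ℂ V) x) = (f b : Module.End ℂ V) (u x) := hcom
        rw [hcom', hx, map_smul]
      have hres : ∀ μ : ℂ, ∃ g : A →* (Module.End ℂ (E μ))ˣ,
          ∀ (b : A) (x : E μ),
            ((g b : Module.End ℂ (E μ)) x : V) = (f b : Module.End ℂ V) (x : V) := by
        intro μ
        refine ⟨MonoidHom.toHomUnits
          { toFun := fun b =>
              LinearMap.restrict (f b : Module.End ℂ V) (fun x hx => hinv μ b x hx)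
            map_one' := LinearMap.ext fun x => Subtype.ext (by
              simp [LinearMap.restrict_apply])
            map_mul' := fun b₁ b₂ => LinearMap.ext fun x => Subtype.ext (by
              simp [LinearMap.restrict_apply]) }, ?_⟩
        intro b x
        simp [MonoidHom.coe_toHomUnits, LinearMap.restrict_apply]
      choose g hg using hres
      have hEne : ∀ μ : ℂ, E μ ≠ ⊤ := by
        intro μ hEt
        exact ha₀ μ (LinearMap.ext fun x => by
          have hx : x ∈ E μ := hEt ▸ Submodule.mem_top
          rw [memE] at hx
          simpa using hx)
      have hEle : ∀ μ : ℂ, finrank ℂ (E μ) ≤ d := by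
        intro μ
        have := Submodule.finrank_lt (K := ℂ) (hEne μ)
        omega
      have hexp : ∀ (K : Subgroup A) (q : A ⧸ K), q ^ 3 = 1 := by
        intro K q
        induction q using QuotientGroup.induction_on with
        | H a =>
          have h := map_pow (QuotientGroup.mk' K) a 3
          rw [h3 a, map_one] at h
          exact h.symm
      obtain ⟨fin1, card1⟩ := ih (E 1) (hEle 1) (A ⧸ (g 1).ker) (hexp _)
        (QuotientGroup.kerLift (g 1)) (QuotientGroup.kerLift_injective _)
      obtain ⟨fin2, card2⟩ := ih (E ω3) (hEle ω3) (A ⧸ (g ω3).ker) (hexp _)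
        (QuotientGroup.kerLift (g ω3)) (QuotientGroup.kerLift_injective _)
      obtain ⟨fin3, card3⟩ := ih (E (ω3^2)) (hEle (ω3^2)) (A ⧸ (g (ω3^2)).ker) (hexp _)
        (QuotientGroup.kerLift (g (ω3^2))) (QuotientGroup.kerLift_injective _)
      have hker : ∀ b : A, b ∈ (g 1).ker → b ∈ (g ω3).ker → b ∈ (g (ω3^2)).ker → b = 1 := by
        intro b k1 k2 k3
        apply hf
        rw [map_one]
        apply Units.ext
        apply LinearMap.ext
        intro x
        obtain ⟨x₁, hx1, x₂, hx2, x₃, hx3, rfl⟩ := span3 x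
        have e : ∀ (μ : ℂ), b ∈ (g μ).ker → ∀ (z : V) (hz : z ∈ E μ),
            (f b : Module.End ℂ V) z = z := by
          intro μ hb z hz
          have h1 := hg μ b ⟨z, hz⟩
          rw [MonoidHom.mem_ker] at hb
          rw [hb] at h1
          simpa using h1.symm
        simp only [Units.val_one, Module.End.one_apply, map_add]
        rw [e 1 k1 x₁ hx1, e ω3 k2 x₂ hx2, e (ω3^2) k3 x₃ hx3]
      set Φ : A →* (A ⧸ (g 1).ker) × (A ⧸ (g ω3).ker) × (A ⧸ (g (ω3^2)).ker) :=
        (QuotientGroup.mk' (g 1).ker).prod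
          ((QuotientGroup.mk' (g ω3).ker).prod (QuotientGroup.mk' (g (ω3^2)).ker)) with hΦ
      have hΦinj : Function.Injective Φ := by
        rw [injective_iff_map_eq_one]
        intro b hb
        have hb1 : QuotientGroup.mk' (g 1).ker b = 1 := congrArg Prod.fst hb
        have hb2 : QuotientGroup.mk' (g ω3).ker b = 1 := congrArg (Prod.fst ∘ Prod.snd) hb
        have hb3 : QuotientGroup.mk' (g (ω3^2)).ker b = 1 := congrArg (Prod.snd ∘ Prod.snd) hb
        exact hker b ((QuotientGroup.eq_one_iff b).1 hb1) ((QuotientGroup.eq_one_iff b).1 hb2)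
          ((QuotientGroup.eq_one_iff b).1 hb3)
      set L : ((E 1) × (E ω3) × (E (ω3^2))) →ₗ[ℂ] V :=
        (E 1).subtype.coprod ((E ω3).subtype.coprod (E (ω3^2)).subtype) with hL
      have hLinj : Function.Injective L := by
        rw [← LinearMap.ker_eq_bot, Submodule.eq_bot_iff]
        rintro ⟨x₁, x₂, x₃⟩ hmem0
        have h0 : (x₁ : V) + ((x₂ : V) + (x₃ : V)) = 0 := by
          simpa [hL, LinearMap.coprod_apply] using hmem0
        obtain ⟨e1, e2, e3⟩ := indep x₁ x₂ x₃ x₁.2 x₂.2 x₃.2 (by rwa [add_assoc])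
        refine Prod.ext (Submodule.coe_eq_zero.1 e1)
          (Prod.ext (Submodule.coe_eq_zero.1 e2) (Submodule.coe_eq_zero.1 e3))
      have hdim : finrank ℂ (E 1) + (finrank ℂ (E ω3) + finrank ℂ (E (ω3^2)))
          ≤ finrank ℂ V := by
        have := LinearMap.finrank_le_finrank_of_injective hLinj
        simpa [Module.finrank_prod] using this
      haveI := fin1; haveI := fin2; haveI := fin3
      haveI : Finite A := Finite.of_injective Φ hΦinj
      refine ⟨inferInstance, ?_⟩
      calc Nat.card A
          ≤ Nat.card ((A ⧸ (g 1).ker) × (A ⧸ (g ω3).ker) × (A ⧸ (g (ω3^2)).ker)) :=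
            Nat.card_le_card_of_injective Φ hΦinj
        _ = Nat.card (A ⧸ (g 1).ker) * (Nat.card (A ⧸ (g ω3).ker)
            * Nat.card (A ⧸ (g (ω3^2)).ker)) := by rw [Nat.card_prod, Nat.card_prod]
        _ ≤ 3 ^ finrank ℂ (E 1) * (3 ^ finrank ℂ (E ω3) * 3 ^ finrank ℂ (E (ω3^2))) :=
            Nat.mul_le_mul card1 (Nat.mul_le_mul card2 card3)
        _ = 3 ^ (finrank ℂ (E 1) + (finrank ℂ (E ω3) + finrank ℂ (E (ω3^2)))) := by
            rw [pow_add, pow_add]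
        _ ≤ 3 ^ finrank ℂ V := Nat.pow_le_pow_right (by norm_num) hdim

/-! ### Permutation lemmas -/

open Equiv

/-- `c3 a b c` is the 3-cycle `swap a b * swap a c` (the cycle `a ↦ c ↦ b ↦ a`). -/
abbrev c3 (a b c : ℕ) : Equiv.Perm ℕ := Equiv.swap a b * Equiv.swap a c

lemma c3_fix {a b c x : ℕ} (ha : x ≠ a) (hb : x ≠ b) (hc : x ≠ c) :
    c3 a b c x = x := by
  simp [Perm.mul_apply, swap_apply_of_ne_of_ne, ha, hb, hc]

lemma c3_apply_fst {x y z : ℕ} (hzx : z ≠ x) (hzy : z ≠ y) : c3 x y z x = z := by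
  rw [Perm.mul_apply, swap_apply_left, swap_apply_of_ne_of_ne hzx hzy]

lemma c3_apply_thd (x y z : ℕ) : c3 x y z z = y := by
  rw [Perm.mul_apply, swap_apply_right, swap_apply_left]

lemma c3_rot {a b c : ℕ} (hab : a ≠ b) (hac : a ≠ c) (hbc : b ≠ c) :
    c3 a b c = c3 c a b := by
  ext x
  simp only [Perm.mul_apply, swap_apply_def]
  split_ifs <;> simp_all

lemma c3_sq {a b c : ℕ} (hab : a ≠ b) (hac : a ≠ c) (hbc : b ≠ c) :
    (c3 a b c) * (c3 a b c) = Equiv.swap a c * Equiv.swap a b := by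
  ext x
  simp only [Perm.mul_apply, swap_apply_def]
  split_ifs <;> simp_all

lemma c3_cube {a b c : ℕ} (hab : a ≠ b) (hac : a ≠ c) (hbc : b ≠ c) :
    (c3 a b c) ^ 3 = 1 := by
  calc (c3 a b c) ^ 3
      = ((c3 a b c) * (c3 a b c)) * (c3 a b c) := by
        rw [pow_succ, pow_two]
    _ = (Equiv.swap a c * Equiv.swap a b) * (Equiv.swap a b * Equiv.swap a c) := by
        rw [c3_sq hab hac hbc]
    _ = 1 := by
        rw [mul_assoc, ← mul_assoc (Equiv.swap a b), swap_mul_self, one_mul, swap_mul_self]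

lemma c3_comm_key {a b c d : ℕ} (hab : a ≠ b) (hac : a ≠ c) (had : a ≠ d)
    (hbc : b ≠ c) (hbd : b ≠ d) (hcd : c ≠ d) :
    Equiv.swap b d * Equiv.swap b c * Equiv.swap a c * Equiv.swap a d
      = Equiv.swap a c * Equiv.swap a b := by
  ext x
  simp only [Perm.mul_apply, swap_apply_def]
  split_ifs <;> simp_all

lemma c3_conj (g : Equiv.Perm ℕ) (a b c : ℕ) :
    g * (c3 a b c) * g⁻¹ = c3 (g a) (g b) (g c) := by
  show _ = Equiv.swap (g a) (g b) * Equiv.swap (g a) (g c)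
  rw [swap_apply_apply, swap_apply_apply]
  group

lemma c3_mem {a b c : ℕ} (hab : a ≠ b) (hac : a ≠ c) (hbc : b ≠ c) :
    c3 a b c ∈ infiniteAlternatingGroup :=
  Subgroup.subset_closure ⟨a, b, c, hab, hac, hbc, rfl⟩

/-! ### The pushed-forward kernel -/

section Ker

variable {M : Type*} [Group M] (v : infiniteAlternatingGroup →* M)

/-- The kernel of `v`, viewed as a subgroup of `Equiv.Perm ℕ`. -/
def KK : Subgroup (Equiv.Perm ℕ) := Subgroup.map infiniteAlternatingGroup.subtype v.ker

lemma KK_le : KK v ≤ infiniteAlternatingGroup := by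
  rintro x ⟨y, _, rfl⟩
  exact y.2

lemma mem_KK {x : Equiv.Perm ℕ} (hx : x ∈ infiniteAlternatingGroup) :
    x ∈ KK v ↔ v ⟨x, hx⟩ = 1 := by
  constructor
  · rintro ⟨y, hy, rfl⟩
    have h1 : v y = 1 := hy
    exact (congrArg v (Subtype.ext rfl)).trans h1
  · intro h
    exact ⟨⟨x, hx⟩, h, rfl⟩

lemma conj_mem_KK {g x : Equiv.Perm ℕ} (hg : g ∈ infiniteAlternatingGroup)
    (hx : x ∈ KK v) : g * x * g⁻¹ ∈ KK v := by
  obtain ⟨y, hy, rfl⟩ := hx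
  refine ⟨⟨g, hg⟩ * y * ⟨g, hg⟩⁻¹, ?_, rfl⟩
  have hy' : v y = 1 := hy
  show v _ = 1
  rw [map_mul, map_mul, map_inv, hy', mul_one, mul_inv_cancel]

lemma replace_last {a b c u : ℕ} (hab : a ≠ b) (hac : a ≠ c) (hbc : b ≠ c)
    (hua : u ≠ a) (hub : u ≠ b) (h : c3 a b c ∈ KK v) : c3 a b u ∈ KK v := by
  rcases eq_or_ne u c with rfl | huc
  · exact h
  · set s := a + b + c + u + 1 with hs
    have hgmem : c3 c s u ∈ infiniteAlternatingGroup :=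
      c3_mem (by omega) (fun h' => huc h'.symm) (by omega)
    have hconj := conj_mem_KK v hgmem h
    rw [c3_conj] at hconj
    have e1 : c3 c s u a = a := c3_fix hac (by omega) (Ne.symm hua)
    have e2 : c3 c s u b = b := c3_fix hbc (by omega) (Ne.symm hub)
    have e3 : c3 c s u c = u := c3_apply_fst huc (by omega)
    rwa [e1, e2, e3] at hconj

lemma transport {a b c x y z : ℕ} (hab : a ≠ b) (hac : a ≠ c) (hbc : b ≠ c)
    (hxy : x ≠ y) (hxz : x ≠ z) (hyz : y ≠ z)
    (h : c3 a b c ∈ KK v) : c3 x y z ∈ KK v := by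
  set p := a + b + c + x + y + z + 1 with hp
  set q := a + b + c + x + y + z + 2 with hq
  set r := a + b + c + x + y + z + 3 with hr
  have h1 : c3 a b r ∈ KK v := replace_last v hab hac hbc (by omega) (by omega) h
  rw [c3_rot hab (by omega) (by omega)] at h1
  have h3 : c3 r a q ∈ KK v := replace_last v (by omega) (by omega) hab (by omega) (by omega) h1
  rw [c3_rot (show r ≠ a by omega) (by omega) (by omega)] at h3
  have h5 : c3 q r p ∈ KK v := replace_last v (by omega) (by omega) (by omega) (by omega) (by omega) h3
  have h6 : c3 q r z ∈ KK v := replace_last v (by omega) (by omega) (by omega) (by omega) (by omega) h5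
  rw [c3_rot (show q ≠ r by omega) (by omega) (by omega)] at h6
  have h8 : c3 z q y ∈ KK v := replace_last v (by omega) (by omega) (by omega) hyz (by omega) h6
  rw [c3_rot (show z ≠ q by omega) (by omega) (by omega)] at h8
  have h10 : c3 y z x ∈ KK v := replace_last v hyz (by omega) (by omega) hxy hxz h8
  rwa [c3_rot hyz (Ne.symm hxy) (Ne.symm hxz)] at h10

lemma comm_step {π : Equiv.Perm ℕ} (hπ : π ∈ KK v) (a c d : ℕ)
    (hb : π a ≠ a) (hc : π c = c) (hd : π d = d)
    (hca : c ≠ a) (hcb : c ≠ π a) (hda : d ≠ a) (hdb : d ≠ π a) (hcd : c ≠ d) :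
    c3 a c (π a) ∈ KK v := by
  set b := π a with hbdef
  have hτmem : c3 a d c ∈ infiniteAlternatingGroup :=
    c3_mem (Ne.symm hda) (Ne.symm hca) (Ne.symm hcd)
  have h1 : π * (c3 a d c * π⁻¹ * (c3 a d c)⁻¹) ∈ KK v :=
    mul_mem hπ (conj_mem_KK v hτmem (inv_mem hπ))
  have hassoc : π * (c3 a d c * π⁻¹ * (c3 a d c)⁻¹)
      = (π * c3 a d c * π⁻¹) * (c3 a d c)⁻¹ := by group
  rw [hassoc, c3_conj, hc, hd] at h1
  have hinv : (c3 a d c)⁻¹ = Equiv.swap a c * Equiv.swap a d := by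
    rw [mul_inv_rev, swap_inv, swap_inv]
  have h4 : c3 b d c * (c3 a d c)⁻¹ = c3 a c b := by
    rw [hinv, ← mul_assoc]
    exact c3_comm_key (Ne.symm hb) (Ne.symm hca) (Ne.symm hda) (Ne.symm hcb) (Ne.symm hdb) hcd
  rwa [h4] at h1

end Ker

/-! ### Main theorem -/

lemma zmod3_exp : ∀ e : Multiplicative (ZMod 3), e ^ 3 = 1 := by decide

/-- Let `G` be the group of finitely supported even permutations of
a countably infinite set.  Then `G` has no nontrivial finite-dimensional unitary
representations: every unitary representation of `G` on a finite-dimensional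
Hilbert space is trivial. -/
theorem infinite_alternating_no_nontrivial_findim_reps
    {H : Type*} [NormedAddCommGroup H] [InnerProductSpace ℂ H] [FiniteDimensional ℂ H]
    (v : infiniteAlternatingGroup →* unitary (H →L[ℂ] H)) :
    ∀ g, v g = 1 := by
  suffices hAll : ∀ (x : Equiv.Perm ℕ) (hx : x ∈ infiniteAlternatingGroup), v ⟨x, hx⟩ = 1 by
    intro g
    exact hAll g.1 g.2
  by_contra hcon
  push_neg at hcon
  obtain ⟨x₀, hx₀, hvx₀⟩ := hcon
  -- there is a generator outside `KK v`
  have hexgen : ∃ a b c : ℕ, a ≠ b ∧ a ≠ c ∧ b ≠ c ∧ c3 a b c ∉ KK v := by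
    by_contra hall
    push_neg at hall
    have hsub : infiniteAlternatingGroup ≤ KK v := by
      rw [infiniteAlternatingGroup]
      refine (Subgroup.closure_le (KK v)).2 ?_
      rintro σ ⟨a, b, c, hab, hac, hbc, rfl⟩
      exact hall a b c hab hac hbc
    exact hvx₀ ((mem_KK v hx₀).1 (hsub hx₀))
  obtain ⟨a₀, b₀, c₀, hab₀, hac₀, hbc₀, hσ₀⟩ := hexgen
  set d := Module.finrank ℂ H with hd
  set n := d + 1 with hn
  -- commuting family of 3-cycles
  set σ : Fin n → Equiv.Perm ℕ := fun i => c3 (3*(i:ℕ)) (3*(i:ℕ)+1) (3*(i:ℕ)+2) with hσdef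
  have hσmem : ∀ i, σ i ∈ infiniteAlternatingGroup :=
    fun i => c3_mem (by omega) (by omega) (by omega)
  set s : Fin n → infiniteAlternatingGroup := fun i => ⟨σ i, hσmem i⟩ with hsdef
  have hs3 : ∀ i, s i ^ 3 = 1 := by
    intro i
    apply Subtype.ext
    simp only [SubgroupClass.coe_pow, OneMemClass.coe_one]
    exact c3_cube (by omega) (by omega) (by omega)
  have hfix : ∀ (j : Fin n) (x : ℕ), (x < 3*(j:ℕ) ∨ 3*(j:ℕ)+2 < x) → σ j x = x :=
    fun j x hx => c3_fix (by omega) (by omega) (by omega)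
  have hdisj : ∀ i j : Fin n, i ≠ j → (σ i).Disjoint (σ j) := by
    intro i j hij x
    have hijn : (i:ℕ) ≠ (j:ℕ) := fun h => hij (Fin.ext h)
    by_cases hxi : x < 3*(i:ℕ) ∨ 3*(i:ℕ)+2 < x
    · exact Or.inl (hfix i x hxi)
    · exact Or.inr (hfix j x (by omega))
  have hcommS : ∀ i j : Fin n, i ≠ j → Commute (s i) (s j) :=
    fun i j hij => Subtype.ext ((hdisj i j hij).commute)
  -- the homomorphism from (ZMod 3)^n
  set f0 : ∀ _ : Fin n, Multiplicative (ZMod 3) →* infiniteAlternatingGroup := fun i =>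
    { toFun := fun e => s i ^ (Multiplicative.toAdd e).val
      map_one' := by
        show s i ^ (Multiplicative.toAdd (1 : Multiplicative (ZMod 3))).val = 1
        norm_num
      map_mul' := fun e₁ e₂ => by
        show s i ^ (Multiplicative.toAdd (e₁ * e₂)).val
          = s i ^ (Multiplicative.toAdd e₁).val * s i ^ (Multiplicative.toAdd e₂).val
        rw [toAdd_mul, ZMod.val_add, ← pow_eq_pow_mod _ (hs3 i), pow_add] } with hf0def
  have hcomm : Pairwise fun i j => ∀ (x y : Multiplicative (ZMod 3)),
      Commute (f0 i x) (f0 j y) :=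
    fun i j hij x y => Commute.pow_pow (hcommS i j hij) _ _
  set φ : (∀ _ : Fin n, Multiplicative (ZMod 3)) →* infiniteAlternatingGroup :=
    MonoidHom.noncommPiCoprod f0 hcomm with hφdef
  -- the composite into the units of End ℂ H
  set endHom : (H →L[ℂ] H) →* Module.End ℂ H :=
    { toFun := fun T => (T : H →ₗ[ℂ] H)
      map_one' := rfl
      map_mul' := fun _ _ => rfl } with hendHom
  set F : (∀ _ : Fin n, Multiplicative (ZMod 3)) →* (Module.End ℂ H)ˣ :=
    ((Units.map endHom).comp Unitary.toUnits).comp (v.comp φ) with hFdef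
  have h3A : ∀ a : (∀ _ : Fin n, Multiplicative (ZMod 3)), a ^ 3 = 1 := by
    intro a
    funext i
    exact zmod3_exp (a i)
  have hFinj : Function.Injective F := by
    rw [injective_iff_map_eq_one]
    intro e he
    have h1 : v (φ e) = 1 := by
      have h2 := congrArg Units.val he
      have h3 : endHom ((v (φ e) : (H →L[ℂ] H))) = 1 := h2
      have h4 : ((v (φ e) : (H →L[ℂ] H)) : H →ₗ[ℂ] H) = ((1 : H →L[ℂ] H) : H →ₗ[ℂ] H) := h3
      have h5 : (v (φ e) : (H →L[ℂ] H)) = 1 := ContinuousLinearMap.coe_injective h4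
      exact Subtype.ext h5
    by_contra hne
    obtain ⟨i, hi⟩ : ∃ i, e i ≠ 1 := by
      by_contra hall2
      push_neg at hall2
      exact hne (funext hall2)
    have hk12 : (Multiplicative.toAdd (e i)).val = 1 ∨ (Multiplicative.toAdd (e i)).val = 2 := by
      have hklt : (Multiplicative.toAdd (e i)).val < 3 := ZMod.val_lt _
      have hk0 : (Multiplicative.toAdd (e i)).val ≠ 0 := by
        intro h0
        apply hi
        have hta : Multiplicative.toAdd (e i) = 0 :=
          (ZMod.val_eq_zero (Multiplicative.toAdd (e i))).1 h0
        have := congrArg Multiplicative.ofAdd hta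
        rwa [ofAdd_toAdd, ofAdd_zero] at this
      omega
    -- the permutation π = φ e
    set π : Equiv.Perm ℕ := ((φ e : infiniteAlternatingGroup) : Equiv.Perm ℕ) with hπdef
    have hπK : π ∈ KK v := ⟨φ e, h1, rfl⟩
    -- generic fixed-point lemma for partial products
    have hprodfix : ∀ (t : Finset (Fin n)) (x : ℕ), (∀ j ∈ t, σ j x = x) →
        ((((t.noncommProd (fun j => f0 j (e j))
          (fun j _ j' _ hjj' => hcomm hjj' _ _)) : infiniteAlternatingGroup)) : Equiv.Perm ℕ) x
          = x := by
      intro t x hx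
      refine Finset.noncommProd_induction t _ _
        (p := fun τ : infiniteAlternatingGroup => ((τ : Equiv.Perm ℕ)) x = x) ?_ ?_ ?_
      · intro τ1 τ2 ht1 ht2
        have hm : ((τ1 * τ2 : infiniteAlternatingGroup) : Equiv.Perm ℕ) x
            = (τ1 : Equiv.Perm ℕ) ((τ2 : Equiv.Perm ℕ) x) := rfl
        rw [hm, ht2, ht1]
      · rfl
      · intro j hj
        show ((s j ^ (Multiplicative.toAdd (e j)).val : infiniteAlternatingGroup)
          : Equiv.Perm ℕ) x = x
        rw [SubgroupClass.coe_pow]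
        exact Equiv.Perm.pow_apply_eq_self_of_apply_eq_self (hx j hj) _
    have hφe : φ e = Finset.univ.noncommProd (fun j => f0 j (e j))
        (fun j _ j' _ hjj' => hcomm hjj' _ _) := rfl
    -- π fixes 3n and 3n+1
    have hπc : π (3*n) = 3*n := by
      rw [hπdef, hφe]
      exact hprodfix Finset.univ _ (fun j _ => hfix j _ (by omega))
    have hπd : π (3*n+1) = 3*n+1 := by
      rw [hπdef, hφe]
      exact hprodfix Finset.univ _ (fun j _ => hfix j _ (by omega))
    -- value of π at 3i
    have hw : (σ i ^ (Multiplicative.toAdd (e i)).val) (3*(i:ℕ)) = 3*(i:ℕ)+2 ∨ (σ i ^ (Multiplicative.toAdd (e i)).val) (3*(i:ℕ)) = 3*(i:ℕ)+1 := by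
      rcases hk12 with hk1 | hk2
      · left
        rw [hk1, pow_one]
        exact c3_apply_fst (by omega) (by omega)
      · right
        rw [hk2, pow_two, Equiv.Perm.mul_apply]
        rw [c3_apply_fst (by omega) (by omega)]
        exact c3_apply_thd _ _ _
    set ρ : infiniteAlternatingGroup := (Finset.univ.erase i).noncommProd
      (fun j => f0 j (e j)) (fun j _ j' _ hjj' => hcomm hjj' _ _) with hρdef
    have hsplit : ρ * f0 i (e i) = φ e := by
      rw [hφe, hρdef]
      exact Finset.noncommProd_erase_mul _ (Finset.mem_univ i) _ _
    have hπa : π (3*(i:ℕ)) = (σ i ^ (Multiplicative.toAdd (e i)).val) (3*(i:ℕ)) := by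
      rw [hπdef, ← hsplit]
      have hm : ((ρ * f0 i (e i) : infiniteAlternatingGroup) : Equiv.Perm ℕ) (3*(i:ℕ))
          = (ρ : Equiv.Perm ℕ) (((f0 i (e i) : infiniteAlternatingGroup)
            : Equiv.Perm ℕ) (3*(i:ℕ))) := rfl
      rw [hm]
      have hcoe : ((f0 i (e i) : infiniteAlternatingGroup) : Equiv.Perm ℕ)
          = σ i ^ (Multiplicative.toAdd (e i)).val := by
        show ((s i ^ (Multiplicative.toAdd (e i)).val : infiniteAlternatingGroup)
          : Equiv.Perm ℕ) = σ i ^ (Multiplicative.toAdd (e i)).val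
        rw [SubgroupClass.coe_pow]
      rw [hcoe]
      exact hprodfix _ _ (fun j hj => by
        have hji : j ≠ i := (Finset.mem_erase.1 hj).1
        have hjin : (j:ℕ) ≠ (i:ℕ) := fun h => hji (Fin.ext h)
        rcases hw with h' | h' <;> (rw [h']; exact hfix j _ (by omega)))
    have hπane : π (3*(i:ℕ)) ≠ 3*(i:ℕ) := by
      rw [hπa]; rcases hw with h' | h' <;> omega
    have hilt : (i:ℕ) < n := i.2
    have hπalt : π (3*(i:ℕ)) < 3*n := by
      rw [hπa]; rcases hw with h' | h' <;> omega
    -- produce a 3-cycle in the kernel, transport it to σ₀, contradiction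
    have h6 := comm_step v hπK (3*(i:ℕ)) (3*n) (3*n+1) hπane hπc hπd
      (by omega) (by omega) (by omega) (by omega) (by omega)
    have h7 := transport v (show 3*(i:ℕ) ≠ 3*n by omega) (Ne.symm hπane)
      (by omega) hab₀ hac₀ hbc₀ h6
    exact absurd h7 hσ₀
  -- apply the key counting lemma
  obtain ⟨hfin, hcard⟩ := keyB d H hd.ge (∀ _ : Fin n, Multiplicative (ZMod 3)) h3A F hFinj
  have hcardA : Nat.card (∀ _ : Fin n, Multiplicative (ZMod 3)) = 3 ^ n := by
    rw [Nat.card_fun]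
    simp [Nat.card_eq_fintype_card]
  rw [hcardA, ← hd] at hcard
  have hpos : 0 < 3 ^ d := pow_pos (by norm_num) _
  rw [hn, pow_succ] at hcard
  omega
end
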